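/- arXiv:1610.01981 — 11 statements merged into one kernel-verified Lean document; each statement's English description precedes it below -/
import Mathlib

section
/- Let T be an empty lattice tetrahedron in ℝ³, i.e. the convex hull of four affinely independent points of ℤ³ containing no point of ℤ³ other than its four vertices. Then there exist integers a, b, c with 0 ≤ a, b < c, gcd(a,c) = gcd(b,c) = gcd(d,c) = 1 (where d = (1−a−b) mod c with 0 ≤ d < c), and an affine unimodular map L such that L(T) = T_{a,b,c}. -/
/-- A point of `ℝ³` is a lattice point if all of its coordinates are integers. -/
def IsLatticePt (x : Fin 3 → ℝ) : Prop := ∀ i, ∃ m : ℤ, x i = (m : ℝ)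

/-- The tetrahedron `T_{a,b,c}`: the convex hull of `(0,0,0)`, `(1,0,0)`, `(0,1,0)`, `(a,b,c)`. -/
def Tet (a b c : ℤ) : Set (Fin 3 → ℝ) :=
  convexHull ℝ {![0,0,0], ![1,0,0], ![0,1,0], ![(a : ℝ), (b : ℝ), (c : ℝ)]}

/-- `T_{a,b,c}` is an empty lattice tetrahedron: it contains no point of `ℤ³`
other than its four vertices. -/
def TetIsEmpty (a b c : ℤ) : Prop :=
  ∀ x ∈ Tet a b c, IsLatticePt x →
    x = ![0,0,0] ∨ x = ![1,0,0] ∨ x = ![0,1,0] ∨ x = ![(a : ℝ), (b : ℝ), (c : ℝ)]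


open Set Matrix

lemma AffineIndependent.linearIndependent_succ_vsub_zero {k V P : Type*} [Ring k]
    [AddCommGroup V] [Module k V] [AddTorsor V P] {n : ℕ} {p : Fin (n + 1) → P}
    (h : AffineIndependent k p) : LinearIndependent k fun i : Fin n => p i.succ -ᵥ p 0 :=
  ((affineIndependent_iff_linearIndependent_vsub k p 0).mp h).comp
    (fun i => ⟨i.succ, Fin.succ_ne_zero i⟩)
    fun _ _ hij => Fin.succ_injective _ (congrArg Subtype.val hij)

lemma smul_add_smul_mem_convexHull {E : Type*} [AddCommGroup E] [Module ℝ E] (x y : E)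
    {s t : ℝ} (hs : 0 ≤ s) (ht : 0 ≤ t) (hst : s + t ≤ 1) :
    s • x + t • y ∈ convexHull ℝ ({0, x, y} : Set E) := by
  have h := (convex_convexHull ℝ ({0, x, y} : Set E)).sum_mem (t := Finset.univ)
    (w := ![1 - s - t, s, t]) (z := ![0, x, y])
    (fun i _ => by fin_cases i <;> simp [hs, ht]; linarith)
    (by simp [Fin.sum_univ_three]; ring)
    (fun i _ => subset_convexHull ℝ _ (by fin_cases i <;> simp))
  simpa [Fin.sum_univ_three] using h

lemma linearIndependent_pair_of_apply_eq_zero {ι : Type*} {x y : ι → ℝ} (i : ι) (hx : x ≠ 0)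
    (hxi : x i = 0) (hyi : y i ≠ 0) : LinearIndependent ℝ ![x, y] :=
  (LinearIndependent.pair_iff' hx).mpr fun r h => hyi (by rw [← h]; simp [hxi])

lemma cross_cramer {R : Type*} [CommRing R] (u v w p : Fin 3 → R) :
    (w ⬝ᵥ u ⨯₃ v) • p = (p ⬝ᵥ v ⨯₃ w) • u + (p ⬝ᵥ w ⨯₃ u) • v + (p ⬝ᵥ u ⨯₃ v) • w := by
  ext i
  fin_cases i <;> simp [cross_apply, dotProduct, Fin.sum_univ_three] <;> ring

lemma exists_dotProduct_dvd {ι : Type*} [Fintype ι] (n : ι → ℤ) :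
    ∃ x : ι → ℤ, ∀ p, x ⬝ᵥ n ∣ p ⬝ᵥ n := by
  set I := Ideal.span (range n)
  obtain ⟨x, hx⟩ := Ideal.mem_span_range_iff_exists_fun.mp (Submodule.IsPrincipal.generator_mem I)
  refine ⟨x, fun p => ?_⟩
  have hp : p ⬝ᵥ n ∈ I := Ideal.mem_span_range_iff_exists_fun.mpr ⟨p, rfl⟩
  rwa [← Submodule.IsPrincipal.span_singleton_generator I, Ideal.mem_span_singleton, ← hx] at hp

lemma exists_isUnit_mulVec_eq_single {R ι : Type*} [CommRing R] [Fintype ι] [DecidableEq ι]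
    (w : ι → ι → R) (hspan : ∀ p, ∃ x : ι → R, ∑ i, x i • w i = p) :
    ∃ M : Matrix ι ι R, IsUnit M ∧ ∀ i, M *ᵥ w i = Pi.single i 1 := by
  set B : Matrix ι ι R := (Matrix.of w)ᵀ
  have hB : ∀ x, B *ᵥ x = ∑ i, x i • w i := fun x => by
    rw [mulVec_transpose, vecMul_eq_sum]
    rfl
  obtain ⟨C, hBC⟩ := mulVec_surjective_iff_exists_right_inverse.mp fun p =>
    (hspan p).imp fun x hx => (hB x).trans hx
  have hCB : C * B = 1 := mul_eq_one_comm.mp hBC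
  refine ⟨C, IsUnit.of_mul_eq_one B hCB, fun i => ?_⟩
  have : w i = B *ᵥ Pi.single i 1 := by simp [hB, Pi.single_apply]
  rw [this, mulVec_mulVec, hCB, one_mulVec]

theorem exists_basis_completion {w₁ w₂ w₃ n : Fin 3 → ℤ} (h₃ : w₃ ⬝ᵥ n ≠ 0)
    (hker : ∀ p, p ⬝ᵥ n = 0 → ∃ m k : ℤ, p = m • w₁ + k • w₂) :
    ∃ (w : Fin 3 → ℤ) (y₁ y₂ c : ℤ), 0 < c ∧ (∀ p, ∃ m k l : ℤ, p = m • w₁ + k • w₂ + l • w) ∧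
      w₃ = y₁ • w₁ + y₂ • w₂ + c • w := by
  -- `w` generates the values of `⬝ᵥ n`, with the sign making `w₃ ⬝ᵥ n` a positive multiple.
  obtain ⟨x, hx⟩ := exists_dotProduct_dvd n
  obtain ⟨t, ht⟩ := hx w₃
  have ht0 : t ≠ 0 := by rintro rfl; simp_all
  have hσ : IsUnit t.sign := Int.isUnit_iff_natAbs_eq.mpr (Int.natAbs_sign_of_ne_zero ht0)
  refine ⟨t.sign • x, ?_⟩
  obtain ⟨y₁, y₂, hy⟩ := hker (w₃ - |t| • t.sign • x) (by
    rw [sub_dotProduct, smul_dotProduct, smul_dotProduct, ht, smul_eq_mul, smul_eq_mul]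
    linear_combination -(x ⬝ᵥ n) * Int.sign_mul_abs t)
  refine ⟨y₁, y₂, |t|, abs_pos.mpr ht0, fun p => ?_, by rw [← hy]; abel⟩
  obtain ⟨l, hl⟩ := hσ.mul_left_dvd.mpr (hx p)
  obtain ⟨m, k, hmk⟩ := hker (p - l • t.sign • x) (by
    rw [sub_dotProduct, smul_dotProduct, smul_dotProduct, hl, smul_eq_mul, smul_eq_mul]
    ring)
  exact ⟨m, k, l, by rw [← hmk]; abel⟩

theorem exists_isUnit_normalForm {w₁ w₂ w₃ n : Fin 3 → ℤ} (h₃ : w₃ ⬝ᵥ n ≠ 0)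
    (hker : ∀ p, p ⬝ᵥ n = 0 → ∃ m k : ℤ, p = m • w₁ + k • w₂) :
    ∃ (M : Matrix (Fin 3) (Fin 3) ℤ) (a b c : ℤ), IsUnit M ∧ 0 ≤ a ∧ a < c ∧ 0 ≤ b ∧ b < c ∧
      M *ᵥ w₁ = ![1, 0, 0] ∧ M *ᵥ w₂ = ![0, 1, 0] ∧ M *ᵥ w₃ = ![a, b, c] := by
  obtain ⟨w₀, y₁, y₂, c, hc, hspan₀, hy⟩ := exists_basis_completion h₃ hker
  -- shear `w₀` so that the coordinates of `w₃` are reduced modulo `c`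
  set w := w₀ + (y₁ / c) • w₁ + (y₂ / c) • w₂
  have hw₃ : w₃ = (y₁ % c) • w₁ + (y₂ % c) • w₂ + c • w := by
    conv_lhs => rw [hy, ← Int.emod_add_mul_ediv y₁ c, ← Int.emod_add_mul_ediv y₂ c]
    module
  have hspan : ∀ p, ∃ z : Fin 3 → ℤ, ∑ i, z i • ![w₁, w₂, w] i = p := fun p => by
    obtain ⟨m, k, l, rfl⟩ := hspan₀ p
    refine ⟨![m - l * (y₁ / c), k - l * (y₂ / c), l], ?_⟩
    simp only [Fin.sum_univ_three, Matrix.cons_val_zero, Matrix.cons_val_one,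
      Matrix.cons_val_two, Matrix.head_cons, Matrix.tail_cons, w]
    module
  obtain ⟨M, hM, hMw⟩ := exists_isUnit_mulVec_eq_single _ hspan
  have hM₁ : M *ᵥ w₁ = ![1, 0, 0] := by
    rw [show w₁ = ![w₁, w₂, w] 0 from rfl, hMw]; ext i; fin_cases i <;> rfl
  have hM₂ : M *ᵥ w₂ = ![0, 1, 0] := by
    rw [show w₂ = ![w₁, w₂, w] 1 from rfl, hMw]; ext i; fin_cases i <;> rfl
  have hM₃ : M *ᵥ w = ![0, 0, 1] := by
    rw [show w = ![w₁, w₂, w] 2 from rfl, hMw]; ext i; fin_cases i <;> rfl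
  refine ⟨M, y₁ % c, y₂ % c, c, hM, Int.emod_nonneg _ hc.ne', Int.emod_lt_of_pos _ hc,
    Int.emod_nonneg _ hc.ne', Int.emod_lt_of_pos _ hc, hM₁, hM₂, ?_⟩
  rw [hw₃, mulVec_add, mulVec_add, mulVec_smul, mulVec_smul, mulVec_smul, hM₁, hM₂, hM₃]
  ext i
  fin_cases i <;> simp

section Lattice

variable {ι : Type*}

def castVec (p : ι → ℤ) : ι → ℝ := fun j => p j

@[simp] lemma castVec_apply (p : ι → ℤ) (j : ι) : castVec p j = p j := rfl

lemma castVec_injective : Function.Injective (castVec : (ι → ℤ) → ι → ℝ) :=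
  fun _ _ h => funext fun j => Int.cast_injective (congrFun h j)

@[simp] lemma castVec_zero : castVec (0 : ι → ℤ) = 0 := by ext; simp

@[simp] lemma castVec_add (p q : ι → ℤ) : castVec (p + q) = castVec p + castVec q := by
  ext; simp

@[simp] lemma castVec_sub (p q : ι → ℤ) : castVec (p - q) = castVec p - castVec q := by
  ext; simp

@[simp] lemma castVec_zsmul (m : ℤ) (p : ι → ℤ) : castVec (m • p) = (m : ℝ) • castVec p := by
  ext; simp

@[simp] lemma castVec_mulVec [Fintype ι] (M : Matrix ι ι ℤ) (p : ι → ℤ) :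
    castVec (M *ᵥ p) = M.map (Int.cast : ℤ → ℝ) *ᵥ castVec p :=
  funext fun i => RingHom.map_mulVec (Int.castRingHom ℝ) M p i

/-- The lattice polytope with vertex set `S` is empty. -/
def IsLatticeEmpty (S : Set (ι → ℤ)) : Prop :=
  ∀ q, castVec q ∈ convexHull ℝ (castVec '' S) → q ∈ S

lemma IsLatticeEmpty.image_of_affineIndependent {κ : Type*} {v : κ → ι → ℤ}
    (hv : AffineIndependent ℝ (castVec ∘ v)) (h : IsLatticeEmpty (range v)) (s : Set κ) :
    IsLatticeEmpty (v '' s) := by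
  intro q hq
  rw [image_image] at hq
  obtain ⟨i, rfl⟩ := h q <| convexHull_mono (by rw [← range_comp]; exact image_subset_range _ _) hq
  have := convexHull_subset_affineSpan _ hq
  exact mem_image_of_mem v ((hv.mem_affineSpan_iff i s).mp this)

noncomputable def intAffineMap [Fintype ι] (M : Matrix ι ι ℤ) (u : ι → ℤ) :
    (ι → ℝ) →ᵃ[ℝ] (ι → ℝ) :=
  (M.map (Int.cast : ℤ → ℝ)).mulVecLin.toAffineMap + AffineMap.const ℝ (ι → ℝ) (castVec u)

variable [Fintype ι]

lemma det_ne_zero_of_linearIndependent_castVec [DecidableEq ι]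
    (A : Matrix ι ι ℤ) (h : LinearIndependent ℝ fun i => castVec (A i)) : A.det ≠ 0 := by
  have hR : IsUnit (A.map (Int.cast : ℤ → ℝ)).det :=
    (Matrix.isUnit_iff_isUnit_det _).mp (linearIndependent_rows_iff_isUnit.mp h)
  rw [← Int.cast_det] at hR
  exact fun h0 => by simp [h0] at hR

lemma intAffineMap_apply (M : Matrix ι ι ℤ) (u : ι → ℤ) (x : ι → ℝ) :
    intAffineMap M u x = M.map (Int.cast : ℤ → ℝ) *ᵥ x + castVec u := rfl

lemma intAffineMap_castVec (M : Matrix ι ι ℤ) (u p : ι → ℤ) :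
    intAffineMap M u (castVec p) = castVec (M *ᵥ p + u) := by
  simp [intAffineMap_apply]

lemma intAffineMap_injective [DecidableEq ι] {M : Matrix ι ι ℤ} (hM : IsUnit M) (u : ι → ℤ) :
    Function.Injective (intAffineMap M u) := by
  have hR : IsUnit (M.map (Int.cast : ℤ → ℝ)) := hM.map (Int.castRingHom ℝ).mapMatrix
  intro x y h
  simp only [intAffineMap_apply, add_left_inj] at h
  exact mulVec_injective_iff_isUnit.mpr hR h

lemma image_convexHull_castVec (M : Matrix ι ι ℤ) (u : ι → ℤ) (S : Set (ι → ℤ)) :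
    intAffineMap M u '' convexHull ℝ (castVec '' S) =
      convexHull ℝ (castVec '' ((fun p => M *ᵥ p + u) '' S)) := by
  rw [AffineMap.image_convexHull, image_image, image_image]
  simp_rw [intAffineMap_castVec]

lemma IsLatticeEmpty.image_mulVec_add [DecidableEq ι] {S : Set (ι → ℤ)} (hS : IsLatticeEmpty S)
    {M : Matrix ι ι ℤ} (hM : IsUnit M) (u : ι → ℤ) :
    IsLatticeEmpty ((fun p => M *ᵥ p + u) '' S) := by
  intro q hq
  rw [← image_convexHull_castVec] at hq
  obtain ⟨x, hx, hxq⟩ := hq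
  obtain ⟨N, hMN⟩ := isUnit_iff_exists_inv.mp hM
  have hq : M *ᵥ (N *ᵥ (q - u)) + u = q := by simp [mulVec_mulVec, hMN]
  have hx' : x = castVec (N *ᵥ (q - u)) :=
    intAffineMap_injective hM u (by rw [hxq, intAffineMap_castVec, hq])
  exact ⟨_, hS _ (hx' ▸ hx), hq⟩

lemma AffineIndependent.castVec_comp_mulVec_add [DecidableEq ι] {κ : Type*} {v : κ → ι → ℤ}
    (hv : AffineIndependent ℝ (castVec ∘ v)) {M : Matrix ι ι ℤ} (hM : IsUnit M) (u : ι → ℤ) :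
    AffineIndependent ℝ (castVec ∘ (fun p => M *ᵥ p + u) ∘ v) := by
  convert hv.map' _ (intAffineMap_injective hM u) using 1
  exact funext fun i => (intAffineMap_castVec M u (v i)).symm

end Lattice

section Triangle

variable {ι : Type*} {u w : ι → ℤ}

lemma IsLatticeEmpty.coeffs_of_mem_triangle (h : IsLatticeEmpty {0, u, w})
    (hind : LinearIndependent ℝ ![castVec u, castVec w]) {q : ι → ℤ} {s t : ℝ}
    (hs : 0 ≤ s) (ht : 0 ≤ t) (hst : s + t ≤ 1)
    (hq : castVec q = s • castVec u + t • castVec w) :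
    (s = 0 ∧ t = 0) ∨ (s = 1 ∧ t = 0) ∨ (s = 0 ∧ t = 1) := by
  have hmem : castVec q ∈ convexHull ℝ (castVec '' {0, u, w}) := by
    rw [hq, image_insert_eq, image_pair, castVec_zero]
    exact smul_add_smul_mem_convexHull _ _ hs ht hst
  rcases h q hmem with rfl | rfl | rfl
  · exact Or.inl (hind.eq_of_pair (by simpa using hq.symm))
  · exact Or.inr (Or.inl (hind.eq_of_pair (by simpa using hq.symm)))
  · exact Or.inr (Or.inr (hind.eq_of_pair (by simpa using hq.symm)))

theorem IsLatticeEmpty.exists_int_combination (h : IsLatticeEmpty {0, u, w})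
    (hind : LinearIndependent ℝ ![castVec u, castVec w]) {p : ι → ℤ}
    (hp : castVec p ∈ Submodule.span ℝ {castVec u, castVec w}) :
    ∃ m k : ℤ, p = m • u + k • w := by
  obtain ⟨α, β, hp⟩ := Submodule.mem_span_pair.mp hp
  -- Reduce to the fundamental parallelogram, which is covered by the triangle and its
  -- reflection through the midpoint of `u` and `w`.
  set s := Int.fract α
  set t := Int.fract β
  have hs := Int.fract_nonneg α
  have ht := Int.fract_nonneg β
  have hs1 := Int.fract_lt_one α
  have ht1 := Int.fract_lt_one β
  set q := p - ⌊α⌋ • u - ⌊β⌋ • w with hqdef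
  have hq : castVec q = s • castVec u + t • castVec w := by
    simp only [hqdef, castVec_sub, castVec_zsmul, ← hp, s, t, Int.fract]
    module
  rcases le_or_gt (s + t) 1 with hst | hst
  · refine ⟨⌊α⌋, ⌊β⌋, ?_⟩
    obtain ⟨hs0, ht0⟩ : s = 0 ∧ t = 0 := by
      have := h.coeffs_of_mem_triangle hind hs ht hst hq
      grind
    have : q = 0 := castVec_injective (by simp [hq, hs0, ht0])
    rw [hqdef] at this
    linear_combination (norm := abel) this
  · have hq' : castVec (u + w - q) = (1 - s) • castVec u + (1 - t) • castVec w := by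
      rw [castVec_sub, castVec_add, hq]
      module
    have := h.coeffs_of_mem_triangle hind (by linarith) (by linarith) (by linarith) hq'
    grind

theorem IsLatticeEmpty.isUnit_of_dvd (h : IsLatticeEmpty {0, u, w})
    (hind : LinearIndependent ℝ ![castVec u, castVec w]) {G k : ℤ} (hG : ∀ j, G ∣ (w - k • u) j) :
    IsUnit G := by
  -- `p = (w - k • u) / G` is a lattice point of the plane, so its `w`-coefficient `1 / G` is
  -- an integer.
  choose p hp using hG
  have hGp : w - k • u = G • p := funext hp
  have hreal : (G : ℝ) • castVec p = castVec w - (k : ℝ) • castVec u := by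
    rw [← castVec_zsmul, ← castVec_zsmul, ← castVec_sub, hGp]
  have hG0 : (G : ℝ) ≠ 0 := by
    rintro hG0
    have := hind.eq_of_pair (s := -k) (t := 1) (s' := 0) (t' := 0)
      (by rw [hG0, zero_smul] at hreal; linear_combination (norm := module) -hreal)
    simp at this
  have hp' : castVec p ∈ Submodule.span ℝ {castVec u, castVec w} := by
    rw [← Submodule.smul_mem_iff _ hG0, hreal]
    exact Submodule.mem_span_pair.mpr ⟨-k, 1, by module⟩
  obtain ⟨m, l, rfl⟩ := h.exists_int_combination hind hp'
  have := hind.eq_of_pair (s := G * m + k) (t := G * l) (s' := 0) (t' := 1)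
    (by simp only [castVec_add, castVec_zsmul, smul_add, smul_smul] at hreal
        linear_combination (norm := module) hreal)
  exact IsUnit.of_mul_eq_one l (by exact_mod_cast this.2)

theorem IsLatticeEmpty.gcd_eq_one (h : IsLatticeEmpty {0, u, w}) (i : ι) (hu : u ≠ 0)
    (hui : u i = 0) (hwi : w i ≠ 0) {x y k : ℤ} (hdvd : ∀ j, (Int.gcd x y : ℤ) ∣ (w - k • u) j) :
    Int.gcd x y = 1 := by
  have hind : LinearIndependent ℝ ![castVec u, castVec w] :=
    linearIndependent_pair_of_apply_eq_zero i (fun h0 => hu (castVec_injective (by simpa)))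
      (by simp [hui]) (by simpa)
  exact Nat.isUnit_iff.mp (Int.ofNat_isUnit.mp (h.isUnit_of_dvd hind hdvd))

end Triangle

theorem IsLatticeEmpty.exists_int_combination_of_dotProduct_cross_eq_zero
    {w₁ w₂ w₃ : Fin 3 → ℤ} (h : IsLatticeEmpty {0, w₁, w₂})
    (hind : LinearIndependent ℝ ![castVec w₁, castVec w₂]) (hD : w₃ ⬝ᵥ w₁ ⨯₃ w₂ ≠ 0)
    {p : Fin 3 → ℤ} (hp : p ⬝ᵥ w₁ ⨯₃ w₂ = 0) : ∃ m k : ℤ, p = m • w₁ + k • w₂ := by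
  have hcr := congrArg castVec (cross_cramer w₁ w₂ w₃ p)
  rw [hp, zero_smul, add_zero] at hcr
  simp only [castVec_zsmul, castVec_add] at hcr
  refine h.exists_int_combination hind ?_
  rw [← Submodule.smul_mem_iff _ (Int.cast_ne_zero (α := ℝ) |>.mpr hD), hcr]
  exact Submodule.mem_span_pair.mpr ⟨_, _, rfl⟩

def tetVertices (a b c : ℤ) : Fin 4 → Fin 3 → ℤ := ![0, ![1, 0, 0], ![0, 1, 0], ![a, b, c]]

lemma convexHull_castVec_range_tetVertices (a b c : ℤ) :
    convexHull ℝ (castVec '' range (tetVertices a b c)) = Tet a b c := by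
  have h₀ : castVec 0 = ![(0 : ℝ), 0, 0] := by ext i; fin_cases i <;> simp
  have h₁ : castVec ![1, 0, 0] = ![1, 0, 0] := by ext i; fin_cases i <;> simp
  have h₂ : castVec ![0, 1, 0] = ![0, 1, 0] := by ext i; fin_cases i <;> simp
  have h₃ : castVec ![a, b, c] = ![(a : ℝ), b, c] := by ext i; fin_cases i <;> rfl
  simp only [tetVertices, Matrix.range_cons, Matrix.range_empty, image_union, image_singleton,
    union_empty, h₀, h₁, h₂, h₃]
  rfl

theorem exists_mulVec_add_comp_eq_tetVertices {v : Fin 4 → Fin 3 → ℤ}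
    (hai : AffineIndependent ℝ (castVec ∘ v)) (hS : IsLatticeEmpty (range v)) :
    ∃ (M : Matrix (Fin 3) (Fin 3) ℤ) (u : Fin 3 → ℤ) (a b c : ℤ), IsUnit M ∧
      0 ≤ a ∧ a < c ∧ 0 ≤ b ∧ b < c ∧ (fun p => M *ᵥ p + u) ∘ v = tetVertices a b c := by
  set w : Fin 3 → Fin 3 → ℤ := fun i => v i.succ - v 0
  have hlin : LinearIndependent ℝ fun i => castVec (w i) := by
    simpa [w] using hai.linearIndependent_succ_vsub_zero
  have hface : IsLatticeEmpty {0, w 0, w 1} := by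
    convert (hS.image_of_affineIndependent hai {0, 1, 2}).image_mulVec_add isUnit_one (-v 0)
      using 1
    simp only [image_insert_eq, image_singleton, one_mulVec, add_neg_cancel, w,
      Fin.succ_zero_eq_one, Fin.succ_one_eq_two, sub_eq_add_neg]
  have hpair : LinearIndependent ℝ ![castVec (w 0), castVec (w 1)] := by
    convert hlin.comp Fin.castSucc (Fin.castSucc_injective 2) using 1
    ext i : 1
    fin_cases i <;> rfl
  have hD : w 2 ⬝ᵥ w 0 ⨯₃ w 1 ≠ 0 := by
    rw [triple_product_permutation, triple_product_eq_det,
      show ![w 0, w 1, w 2] = w by ext i : 1; fin_cases i <;> rfl]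
    exact det_ne_zero_of_linearIndependent_castVec w hlin
  obtain ⟨M, a, b, c, hM, ha, hac, hb, hbc, h₁, h₂, h₃⟩ := exists_isUnit_normalForm hD
    fun p => hface.exists_int_combination_of_dotProduct_cross_eq_zero hpair hD
  refine ⟨M, -(M *ᵥ v 0), a, b, c, hM, ha, hac, hb, hbc, ?_⟩
  have hw : ∀ i, M *ᵥ v i.succ + -(M *ᵥ v 0) = M *ᵥ w i := fun i => by
    rw [mulVec_sub, sub_eq_add_neg]
  ext i : 1
  fin_cases i
  · simp [tetVertices]
  · exact (hw 0).trans h₁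
  · exact (hw 1).trans h₂
  · exact (hw 2).trans h₃

theorem gcd_eq_one_of_isLatticeEmpty_tetVertices {a b c : ℤ} (hc : c ≠ 0)
    (hai : AffineIndependent ℝ (castVec ∘ tetVertices a b c))
    (h : IsLatticeEmpty (range (tetVertices a b c))) :
    Int.gcd a c = 1 ∧ Int.gcd b c = 1 ∧ Int.gcd (1 - a - b) c = 1 := by
  have hface := h.image_of_affineIndependent hai
  have h₀₁₃ : IsLatticeEmpty {0, ![1, 0, 0], ![a, b, c]} := by
    simpa [tetVertices, image_insert_eq] using hface {0, 1, 3}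
  have h₀₂₃ : IsLatticeEmpty {0, ![0, 1, 0], ![a, b, c]} := by
    simpa [tetVertices, image_insert_eq] using hface {0, 2, 3}
  have h₁₂₃ : IsLatticeEmpty {0, ![-1, 1, 0], ![a - 1, b, c]} := by
    convert (hface {1, 2, 3}).image_mulVec_add isUnit_one (-![1, 0, 0]) using 1
    simp [tetVertices, image_insert_eq, sub_eq_add_neg, ← Matrix.cons_zero_zero]
  refine ⟨h₀₂₃.gcd_eq_one 2 (by simp) rfl hc (k := b) fun j => ?_,
    h₀₁₃.gcd_eq_one 2 (by simp) rfl hc (k := a) fun j => ?_,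
    h₁₂₃.gcd_eq_one 2 (by simp) rfl hc (k := b) fun j => ?_⟩ <;>
    fin_cases j <;> simp [Int.gcd_dvd_left, Int.gcd_dvd_right]
  rw [show a - 1 + b = -(1 - a - b) by ring, dvd_neg]
  exact Int.gcd_dvd_left ..

/-- **Reduction to normal form.** Let `T` be an empty lattice tetrahedron in `ℝ³`, i.e. the
convex hull of four affinely independent points of `ℤ³` containing no point of `ℤ³` other
than its four vertices. Then there exist integers `a, b, c` with `0 ≤ a, b < c`,
`gcd(a,c) = gcd(b,c) = gcd(d,c) = 1` (where `d = (1 - a - b) mod c`), and an affine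
unimodular map `L(x) = Mx + u` (with `M` an integer matrix of determinant `±1` and `u ∈ ℤ³`)
such that `L(T) = T_{a,b,c}`. -/
theorem stmt_0 (v : Fin 4 → Fin 3 → ℤ)
    (hai : AffineIndependent ℝ (fun i => fun j => (v i j : ℝ)))
    (hempty : ∀ x ∈ convexHull ℝ (Set.range (fun i => fun j => ((v i j : ℤ) : ℝ))),
      IsLatticePt x → ∃ i, x = fun j => (v i j : ℝ)) :
    ∃ (a b c : ℤ) (M : Matrix (Fin 3) (Fin 3) ℤ) (u : Fin 3 → ℤ),
      0 ≤ a ∧ a < c ∧ 0 ≤ b ∧ b < c ∧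
      Int.gcd a c = 1 ∧ Int.gcd b c = 1 ∧ Int.gcd ((1 - a - b) % c) c = 1 ∧
      (M.det = 1 ∨ M.det = -1) ∧
      (fun x : Fin 3 → ℝ => (M.map (Int.cast : ℤ → ℝ)).mulVec x + fun j => (u j : ℝ)) ''
          (convexHull ℝ (Set.range (fun i => fun j => ((v i j : ℤ) : ℝ)))) =
        Tet a b c := by
  replace hai : AffineIndependent ℝ (castVec ∘ v) := hai
  have hS : IsLatticeEmpty (range v) := fun q hq => by
    obtain ⟨i, hi⟩ := hempty (castVec q) (by rwa [← range_comp] at hq) fun j => ⟨q j, rfl⟩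
    exact ⟨i, castVec_injective hi.symm⟩
  obtain ⟨M, u, a, b, c, hM, ha, hac, hb, hbc, hv⟩ := exists_mulVec_add_comp_eq_tetVertices hai hS
  have hai' := hai.castVec_comp_mulVec_add hM u
  have hS' := hS.image_mulVec_add hM u
  rw [← range_comp, hv] at hS'
  rw [hv] at hai'
  obtain ⟨hac', hbc', hdc'⟩ := gcd_eq_one_of_isLatticeEmpty_tetVertices (by omega) hai' hS'
  refine ⟨a, b, c, M, u, ha, hac, hb, hbc, hac', hbc', by rwa [Int.gcd_emod],
    Int.isUnit_iff.mp ((Matrix.isUnit_iff_isUnit_det M).mp hM), ?_⟩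
  change intAffineMap M u '' convexHull ℝ (range (castVec ∘ v)) = _
  rw [range_comp, image_convexHull_castVec, ← range_comp, hv, convexHull_castVec_range_tetVertices]
end

section
/- Let a, b, c be integers with 0 ≤ a, b < c and let d = (1−a−b) mod c. If gcd(a,c) = gcd(b,c) = gcd(d,c) = 1 and at least one of a = 1, b = 1, c = 1, d = 1 holds, then the tetrahedron T_{a,b,c} is empty. -/
/-!
A lattice point `(m₀, m₁, m₂)` of `T_{a,b,c}` has barycentric coordinates whose `c`-multiples are
the integers `c m₀ - a m₂`, `c m₁ - b m₂`, `m₂` and their complement to `c`. On the layers `m₂ = 0`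
and `m₂ = c` only the vertices have all four nonnegative. For `0 < m₂ < c`, divisibility by `c`
pins the point to an edge: if `a = 1` then `c ∣ c m₀ = (c m₀ - m₂) + m₂ ∈ (0, c]` forces
`c m₁ = b m₂`; if `d = 1` then `a + b = c`, and `c ∣ (c m₀ - a m₂) + (c m₁ - b m₂) < c` forces
`c m₀ = a m₂`. So `c` divides `b m₂` or `a m₂`, contradicting `gcd(b, c) = 1` or `gcd(a, c) = 1`.
The case `b = 1` is symmetric, and `c = 1` leaves no room for `0 < m₂ < c`.
-/

lemma IsLatticePt.exists_eq {x : Fin 3 → ℝ} (hx : IsLatticePt x) :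
    ∃ m₀ m₁ m₂ : ℤ, x = ![(m₀ : ℝ), m₁, m₂] := by
  obtain ⟨m₀, h₀⟩ := hx 0
  obtain ⟨m₁, h₁⟩ := hx 1
  obtain ⟨m₂, h₂⟩ := hx 2
  exact ⟨m₀, m₁, m₂, by ext i; fin_cases i <;> simp [h₀, h₁, h₂]⟩

lemma exists_barycentric_of_mem_Tet {a b c : ℤ} {x : Fin 3 → ℝ} (hx : x ∈ Tet a b c) :
    ∃ t₁ t₂ t₃ : ℝ, 0 ≤ t₁ ∧ 0 ≤ t₂ ∧ 0 ≤ t₃ ∧ t₁ + t₂ + t₃ ≤ 1 ∧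
      x 0 = t₁ + t₃ * a ∧ x 1 = t₂ + t₃ * b ∧ x 2 = t₃ * c := by
  suffices Tet a b c ⊆ {y | ∃ t₁ t₂ t₃ : ℝ, 0 ≤ t₁ ∧ 0 ≤ t₂ ∧ 0 ≤ t₃ ∧ t₁ + t₂ + t₃ ≤ 1 ∧
      y 0 = t₁ + t₃ * a ∧ y 1 = t₂ + t₃ * b ∧ y 2 = t₃ * c} from this hx
  refine convexHull_min ?_ ?_
  · intro y hy
    simp only [Set.mem_insert_iff, Set.mem_singleton_iff] at hy
    rcases hy with rfl | rfl | rfl | rfl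
    · exact ⟨0, 0, 0, by simp⟩
    · exact ⟨1, 0, 0, by simp⟩
    · exact ⟨0, 1, 0, by simp⟩
    · exact ⟨0, 0, 1, by simp⟩
  · rintro p ⟨p₁, p₂, p₃, hp₁, hp₂, hp₃, hps, hp0, hp1, hp2⟩
      q ⟨q₁, q₂, q₃, hq₁, hq₂, hq₃, hqs, hq0, hq1, hq2⟩ α β hα hβ hαβ
    refine ⟨α * p₁ + β * q₁, α * p₂ + β * q₂, α * p₃ + β * q₃, by positivity, by positivity,
      by positivity, ?_, ?_, ?_, ?_⟩
    · nlinarith [mul_le_mul_of_nonneg_left hps hα, mul_le_mul_of_nonneg_left hqs hβ]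
    all_goals simp only [Pi.add_apply, Pi.smul_apply, smul_eq_mul, hp0, hp1, hp2, hq0, hq1, hq2]
    all_goals ring

/-- `c` times the barycentric coordinates of `(m₀, m₁, m₂)` with respect to the vertices
`(1,0,0)`, `(0,1,0)`, `(a,b,c)` and `(0,0,0)` of `T_{a,b,c}` are nonnegative. -/
def ScaledBarycentricNonneg (a b c m₀ m₁ m₂ : ℤ) : Prop :=
  0 ≤ c * m₀ - a * m₂ ∧ 0 ≤ c * m₁ - b * m₂ ∧ 0 ≤ m₂ ∧
    (c * m₀ - a * m₂) + (c * m₁ - b * m₂) + m₂ ≤ c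

lemma scaledBarycentricNonneg_of_mem_Tet {a b c m₀ m₁ m₂ : ℤ} (hc : 0 ≤ c)
    (hx : ![(m₀ : ℝ), m₁, m₂] ∈ Tet a b c) : ScaledBarycentricNonneg a b c m₀ m₁ m₂ := by
  obtain ⟨t₁, t₂, t₃, ht₁, ht₂, ht₃, hts, h₀, h₁, h₂⟩ := exists_barycentric_of_mem_Tet hx
  simp only [Matrix.cons_val_zero, Matrix.cons_val_one, Matrix.cons_val_two, Matrix.head_cons,
    Matrix.tail_cons] at h₀ h₁ h₂
  have hcR : (0 : ℝ) ≤ c := by exact_mod_cast hc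
  have e₁ : ((c * m₀ - a * m₂ : ℤ) : ℝ) = c * t₁ := by push_cast; rw [h₀, h₂]; ring
  have e₂ : ((c * m₁ - b * m₂ : ℤ) : ℝ) = c * t₂ := by push_cast; rw [h₁, h₂]; ring
  have e₃ : ((m₂ : ℤ) : ℝ) = c * t₃ := by rw [h₂]; ring
  refine ⟨?_, ?_, ?_, ?_⟩
  · exact_mod_cast e₁ ▸ mul_nonneg hcR ht₁
  · exact_mod_cast e₂ ▸ mul_nonneg hcR ht₂
  · exact_mod_cast e₃ ▸ mul_nonneg hcR ht₃
  · have : ((c * m₀ - a * m₂ + (c * m₁ - b * m₂) + m₂ : ℤ) : ℝ) ≤ c := by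
      rw [Int.cast_add, Int.cast_add, e₁, e₂, e₃]
      nlinarith [mul_le_mul_of_nonneg_left hts hcR]
    exact_mod_cast this

lemma Int.eq_zero_of_dvd_mul_of_gcd_eq_one {a c m : ℤ} (hg : Int.gcd a c = 1)
    (hdvd : c ∣ a * m) (h₀ : 0 ≤ m) (hlt : m < c) : m = 0 :=
  Int.eq_zero_of_dvd_of_nonneg_of_lt h₀ hlt <|
    (Int.isCoprime_iff_gcd_eq_one.mpr (Int.gcd_comm a c ▸ hg)).dvd_of_dvd_mul_left hdvd

namespace ScaledBarycentricNonneg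

variable {a b c m₀ m₁ m₂ : ℤ}

lemma swap (h : ScaledBarycentricNonneg a b c m₀ m₁ m₂) :
    ScaledBarycentricNonneg b a c m₁ m₀ m₂ := by
  obtain ⟨h₀, h₁, h₂, hs⟩ := h
  exact ⟨h₁, h₀, h₂, by linarith⟩

lemma eq_vertex (hc : 0 < c) (h : ScaledBarycentricNonneg a b c m₀ m₁ m₂)
    (hgap : m₂ ∉ Set.Ioo 0 c) :
    (m₀ = 0 ∧ m₁ = 0 ∧ m₂ = 0) ∨ (m₀ = 1 ∧ m₁ = 0 ∧ m₂ = 0) ∨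
      (m₀ = 0 ∧ m₁ = 1 ∧ m₂ = 0) ∨ (m₀ = a ∧ m₁ = b ∧ m₂ = c) := by
  obtain ⟨h₀, h₁, h₂, hs⟩ := h
  have hm₂ : m₂ = 0 ∨ m₂ = c := by
    rw [Set.mem_Ioo] at hgap
    omega
  rcases hm₂ with rfl | rfl
  · have hm₀ : 0 ≤ m₀ := nonneg_of_mul_nonneg_right (by linarith) hc
    have hm₁ : 0 ≤ m₁ := nonneg_of_mul_nonneg_right (by linarith) hc
    have hsum : m₀ + m₁ ≤ 1 := le_of_mul_le_mul_left (by linarith) hc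
    omega
  · have hm₀ : a ≤ m₀ := le_of_mul_le_mul_left (by linarith) hc
    have hm₁ : b ≤ m₁ := le_of_mul_le_mul_left (by linarith) hc
    have hsum : m₀ + m₁ ≤ a + b := le_of_mul_le_mul_left (by linarith) hc
    omega

lemma height_not_mem_Ioo_of_left_eq_one (hgb : Int.gcd b c = 1)
    (h : ScaledBarycentricNonneg 1 b c m₀ m₁ m₂) : m₂ ∉ Set.Ioo 0 c := by
  rintro ⟨hpos, hlt⟩
  obtain ⟨h₀, h₁, -, hs⟩ := h
  have hm₀ : c - c * m₀ = 0 :=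
    Int.eq_zero_of_dvd_of_nonneg_of_lt (by linarith) (by linarith)
      (dvd_sub dvd_rfl (dvd_mul_right c m₀))
  have hdvd : c ∣ b * m₂ := ⟨m₁, by linarith⟩
  exact hpos.ne' (Int.eq_zero_of_dvd_mul_of_gcd_eq_one hgb hdvd hpos.le hlt)

lemma height_not_mem_Ioo_of_add_eq (hga : Int.gcd a c = 1) (hab : a + b = c)
    (h : ScaledBarycentricNonneg a b c m₀ m₁ m₂) : m₂ ∉ Set.Ioo 0 c := by
  rintro ⟨hpos, hlt⟩
  obtain ⟨h₀, h₁, -, hs⟩ := h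
  have hsum : (c * m₀ - a * m₂) + (c * m₁ - b * m₂) = c * (m₀ + m₁ - m₂) := by
    rw [← hab]; ring
  have hzero : (c * m₀ - a * m₂) + (c * m₁ - b * m₂) = 0 :=
    Int.eq_zero_of_dvd_of_nonneg_of_lt (by linarith) (by linarith) (hsum ▸ dvd_mul_right _ _)
  have hdvd : c ∣ a * m₂ := ⟨m₀, by linarith⟩
  exact hpos.ne' (Int.eq_zero_of_dvd_mul_of_gcd_eq_one hga hdvd hpos.le hlt)

end ScaledBarycentricNonneg

lemma add_eq_of_one_sub_sub_emod_eq_one {a b c : ℤ} (ha : 0 ≤ a) (hac : a < c) (hb : 0 ≤ b)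
    (hbc : b < c) (hga : Int.gcd a c = 1) (h : (1 - a - b) % c = 1) : a + b = c := by
  have hdvd : c ∣ a + b := by
    have h' := Int.dvd_self_sub_emod (x := 1 - a - b) (m := c)
    rwa [h, show 1 - a - b - 1 = -(a + b) by ring, dvd_neg] at h'
  rcases lt_or_ge (a + b) c with hlt | hge
  · have hab : a + b = 0 := Int.eq_zero_of_dvd_of_nonneg_of_lt (by omega) hlt hdvd
    obtain rfl : a = 0 := by omega
    obtain rfl : c = 1 := by rw [Int.gcd_zero_left] at hga; omega
    simp at h
  · have := Int.eq_zero_of_dvd_of_nonneg_of_lt (by omega) (by omega) (dvd_sub hdvd dvd_rfl)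
    omega

theorem stmt_1_general (a b c d : ℤ) (ha : 0 ≤ a) (hac : a < c) (hb : 0 ≤ b) (hbc : b < c)
    (hd : d = (1 - a - b) % c)
    (hga : Int.gcd a c = 1) (hgb : Int.gcd b c = 1)
    (hone : a = 1 ∨ b = 1 ∨ c = 1 ∨ d = 1) :
    TetIsEmpty a b c := by
  intro x hx hlat
  obtain ⟨m₀, m₁, m₂, rfl⟩ := hlat.exists_eq
  have hc : 0 < c := by omega
  have h := scaledBarycentricNonneg_of_mem_Tet hc.le hx
  have hgap : m₂ ∉ Set.Ioo 0 c := by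
    rcases hone with rfl | rfl | rfl | rfl
    · exact h.height_not_mem_Ioo_of_left_eq_one hgb
    · exact h.swap.height_not_mem_Ioo_of_left_eq_one hga
    · simp only [Set.mem_Ioo]; omega
    · exact h.height_not_mem_Ioo_of_add_eq hga
        (add_eq_of_one_sub_sub_emod_eq_one ha hac hb hbc hga hd.symm)
  rcases h.eq_vertex hc hgap with ⟨rfl, rfl, rfl⟩ | ⟨rfl, rfl, rfl⟩ | ⟨rfl, rfl, rfl⟩ |
    ⟨rfl, rfl, rfl⟩ <;> simp

/-- **White's theorem, sufficiency.** If `0 ≤ a, b < c`, `d = (1 - a - b) mod c`,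
`gcd(a,c) = gcd(b,c) = gcd(d,c) = 1` and at least one of `a = 1`, `b = 1`, `c = 1`, `d = 1`
holds, then the tetrahedron `T_{a,b,c}` is empty. -/
theorem stmt_1 (a b c d : ℤ) (ha : 0 ≤ a) (hac : a < c) (hb : 0 ≤ b) (hbc : b < c)
    (hd : d = (1 - a - b) % c)
    (hga : Int.gcd a c = 1) (hgb : Int.gcd b c = 1) (hgd : Int.gcd d c = 1)
    (hone : a = 1 ∨ b = 1 ∨ c = 1 ∨ d = 1) :
    TetIsEmpty a b c :=
  stmt_1_general a b c d ha hac hb hbc hd hga hgb hone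
end

section
/- Let a, b, c be integers with 0 ≤ a, b < c and let d = (1−a−b) mod c. If the tetrahedron T_{a,b,c} is empty, then gcd(a,c) = gcd(b,c) = gcd(d,c) = 1 and at least one of a = 1, b = 1, c = 1, d = 1 holds. -/
theorem sum_four_smul_mem_convexHull {E : Type*} [AddCommGroup E] [Module ℝ E] {x₀ x₁ x₂ x₃ : E}
    {t₀ t₁ t₂ t₃ : ℝ} (h₀ : 0 ≤ t₀) (h₁ : 0 ≤ t₁) (h₂ : 0 ≤ t₂) (h₃ : 0 ≤ t₃)
    (hsum : t₀ + t₁ + t₂ + t₃ = 1) :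
    t₀ • x₀ + t₁ • x₁ + t₂ • x₂ + t₃ • x₃ ∈ convexHull ℝ {x₀, x₁, x₂, x₃} := by
  have hw : ∀ i ∈ Finset.univ, 0 ≤ ![t₀, t₁, t₂, t₃] i := by
    intro i _; fin_cases i <;> assumption
  have hmem : ∀ i ∈ Finset.univ, ![x₀, x₁, x₂, x₃] i ∈ convexHull ℝ {x₀, x₁, x₂, x₃} := by
    intro i _; apply subset_convexHull; fin_cases i <;> simp
  simpa [Fin.sum_univ_four, add_assoc] using
    (convex_convexHull ℝ _).sum_mem hw (by simpa [Fin.sum_univ_four, add_assoc] using hsum) hmem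

section Tetrahedron

variable {a b c k : ℤ}

theorem mem_tet_of_mul_emod_add_mul_emod_le (hk : 0 < k) (hkc : k < c)
    (hle : k * a % c + k * b % c ≤ k) :
    ![((a - k * a / c : ℤ) : ℝ), ((b - k * b / c : ℤ) : ℝ), ((c - k : ℤ) : ℝ)] ∈ Tet a b c := by
  have hc : (0 : ℝ) < c := by exact_mod_cast hk.trans hkc
  have hr : (0 : ℝ) ≤ (k * a % c : ℤ) := by exact_mod_cast Int.emod_nonneg _ (by omega)
  have hs : (0 : ℝ) ≤ (k * b % c : ℤ) := by exact_mod_cast Int.emod_nonneg _ (by omega)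
  have ha : ((k * a / c : ℤ) : ℝ) * c + (k * a % c : ℤ) = k * a := by
    exact_mod_cast (Int.ediv_mul_add_emod (k * a) c)
  have hb : ((k * b / c : ℤ) : ℝ) * c + (k * b % c : ℤ) = k * b := by
    exact_mod_cast (Int.ediv_mul_add_emod (k * b) c)
  have hle' : ((k * a % c : ℤ) : ℝ) + (k * b % c : ℤ) ≤ k := by exact_mod_cast hle
  have hkc' : (k : ℝ) ≤ c := by exact_mod_cast hkc.le
  have hpt : ![((a - k * a / c : ℤ) : ℝ), ((b - k * b / c : ℤ) : ℝ), ((c - k : ℤ) : ℝ)] =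
      ((k - (k * a % c : ℤ) - (k * b % c : ℤ)) / c : ℝ) • ![0, 0, 0] +
      (((k * a % c : ℤ) : ℝ) / c) • ![1, 0, 0] + (((k * b % c : ℤ) : ℝ) / c) • ![0, 1, 0] +
      ((c - k) / c : ℝ) • ![(a : ℝ), (b : ℝ), (c : ℝ)] := by
    funext i
    fin_cases i <;>
      simp only [Fin.isValue, Fin.zero_eta, Fin.mk_one, Fin.reduceFinMk, Pi.add_apply, Pi.smul_apply,
        Matrix.cons_val, smul_eq_mul, Int.cast_sub, mul_zero, mul_one, zero_add, add_zero] <;>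
      field_simp
    · linear_combination -ha
    · linear_combination -hb
  rw [hpt]
  apply sum_four_smul_mem_convexHull <;> first
    | (apply div_nonneg <;> linarith)
    | (field_simp; ring)

theorem TetIsEmpty.lt_mul_emod_add_mul_emod (h : TetIsEmpty a b c) (hk : 0 < k) (hkc : k < c) :
    k < k * a % c + k * b % c := by
  by_contra! hle
  have hlat : IsLatticePt
      ![((a - k * a / c : ℤ) : ℝ), ((b - k * b / c : ℤ) : ℝ), ((c - k : ℤ) : ℝ)] := by
    intro i; fin_cases i <;> exact ⟨_, rfl⟩
  rcases h _ (mem_tet_of_mul_emod_add_mul_emod_le hk hkc hle) hlat with hv | hv | hv | hv <;>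
  · have h2 := congrFun hv 2
    simp only [Fin.isValue, Matrix.cons_val] at h2
    norm_cast at h2
    omega

end Tetrahedron

section Residues

variable {c x k : ℤ}

theorem emod_eq_of_dvd_sub {y : ℤ} (hc : 0 < c) (h : c ∣ y - x) (hy : 0 ≤ y) (hyc : y < c) :
    x % c = y :=
  (Int.emod_eq_iff hc.ne').2 ⟨hy, by rwa [Int.natCast_natAbs, abs_of_pos hc], h⟩

theorem mul_emod_add_sub_mul_emod_le (hc : 0 < c) : k * x % c + (c - k) * x % c ≤ c := by
  have : (c - k) * x % c = -(k * x) % c := by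
    rw [Int.emod_eq_emod_iff_emod_sub_eq_zero, show (c - k) * x - -(k * x) = c * x by ring,
      Int.mul_emod_right]
  rw [this, Int.neg_emod]
  split_ifs
  · linarith [Int.emod_lt_of_pos (k * x) hc]
  · rw [Int.natCast_natAbs, abs_of_pos hc]; linarith

theorem sub_mul_emod_eq_zero (h : k * x % c = 0) : (c - k) * x % c = 0 := by
  rw [sub_mul, Int.sub_emod, Int.mul_emod_right, h]; rfl

theorem gcd_eq_one_of_forall_mul_emod_ne_zero (hc : 0 < c)
    (h : ∀ k, 0 < k → k < c → k * x % c ≠ 0) : Int.gcd x c = 1 := by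
  obtain ⟨k, hk⟩ := Int.gcd_dvd_right x c
  obtain ⟨y, hy⟩ := Int.gcd_dvd_left x c
  by_contra hg
  have hg2 : 2 ≤ (Int.gcd x c : ℤ) := by
    have : Int.gcd x c ≠ 0 := fun h0 => hc.ne' (Int.gcd_eq_zero_iff.1 h0).2
    omega
  refine h k (by nlinarith) (by nlinarith) ?_
  rw [hy, show k * (Int.gcd x c * y) = (Int.gcd x c * k) * y by ring, ← hk, Int.mul_emod_right]

theorem mul_emod_eq_or (hc : 0 < c) (hx : 0 ≤ x) (hxc : x < c) :
    k * x % c = (k - 1) * x % c + x ∨ k * x % c = (k - 1) * x % c + x - c := by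
  have hdvd : c ∣ (k - 1) * x % c + x - k * x := by
    convert (Int.dvd_emod_sub_self : c ∣ (k - 1) * x % c - (k - 1) * x) using 1; ring
  have := Int.emod_nonneg ((k - 1) * x) hc.ne'
  have := Int.emod_lt_of_pos ((k - 1) * x) hc
  rcases lt_or_ge ((k - 1) * x % c + x) c with h | h
  · exact .inl (emod_eq_of_dvd_sub hc hdvd (by omega) h)
  · refine .inr (emod_eq_of_dvd_sub hc ?_ (by omega) (by omega))
    rw [show (k - 1) * x % c + x - c - k * x = (k - 1) * x % c + x - k * x - c by ring]
    exact dvd_sub hdvd dvd_rfl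

theorem mul_emod_of_lt_self (hc : 0 < c) (hx : 0 ≤ x) (hxc : x < c) (h : k * x % c < x) :
    k * x % c = (k - 1) * x % c + x - c :=
  (mul_emod_eq_or hc hx hxc).resolve_left (by have := Int.emod_nonneg ((k - 1) * x) hc.ne'; omega)

theorem mul_emod_of_self_le (hc : 0 < c) (hx : 0 ≤ x) (hxc : x < c) (h : x ≤ k * x % c) :
    k * x % c = (k - 1) * x % c + x :=
  (mul_emod_eq_or hc hx hxc).resolve_right (by have := Int.emod_lt_of_pos ((k - 1) * x) hc; omega)

theorem mul_le_of_forall_mul_emod_le {m n : ℤ} (hx : 0 ≤ x) (hxc : x < c) (hm : 2 * m < c)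
    (h : ∀ j, 0 < j → j ≤ n → j * x % c ≤ m) {j : ℤ} (hj : 0 < j) (hjn : j ≤ n) :
    j * x ≤ m := by
  have hx1 : x ≤ m := by simpa [Int.emod_eq_of_lt hx hxc] using h 1 one_pos (by omega)
  induction j, (show 1 ≤ j by omega) using Int.leInduction with
  | base => simpa using hx1
  | succ i hi ih =>
    have hix : i * x ≤ m := ih (by omega) (by omega)
    rw [← Int.emod_eq_of_lt (a := (i + 1) * x) (b := c) (by nlinarith) (by nlinarith)]
    exact h _ hj hjn

end Residues

def ResidueSumEq (c a b d : ℤ) : Prop :=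
  ∀ k, 0 < k → k < c → k * a % c + k * b % c + k * d % c = k + c

namespace ResidueSumEq

variable {c a b d k : ℤ}

theorem swap₁₂ (h : ResidueSumEq c a b d) : ResidueSumEq c b a d :=
  fun k hk hkc => by linarith [h k hk hkc]

theorem swap₂₃ (h : ResidueSumEq c a b d) : ResidueSumEq c a d b :=
  fun k hk hkc => by linarith [h k hk hkc]

theorem of_lt_mul_emod_add_mul_emod (hc : 0 < c) (hsum : c ∣ a + b + d - 1)
    (hlt : ∀ k, 0 < k → k < c → k < k * a % c + k * b % c) : ResidueSumEq c a b d := by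
  have hge : ∀ k, 0 < k → k < c → k + c ≤ k * a % c + k * b % c + k * d % c := by
    intro k hk hkc
    have hdvd : c ∣ k * a % c + k * b % c + k * d % c - k := by
      have : k * a % c + k * b % c + k * d % c - k = (k * a % c - k * a) + (k * b % c - k * b) +
          (k * d % c - k * d) + k * (a + b + d - 1) := by ring
      rw [this]
      exact dvd_add (dvd_add (dvd_add Int.dvd_emod_sub_self Int.dvd_emod_sub_self)
        Int.dvd_emod_sub_self) (hsum.mul_left k)
    have := hlt k hk hkc
    have := Int.emod_nonneg (k * d) hc.ne'
    linarith [Int.le_of_dvd (by linarith) hdvd]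
  intro k hk hkc
  have := hge (c - k) (by omega) (by omega)
  have := mul_emod_add_sub_mul_emod_le (k := k) (x := a) hc
  have := mul_emod_add_sub_mul_emod_le (k := k) (x := b) hc
  have := mul_emod_add_sub_mul_emod_le (k := k) (x := d) hc
  linarith [hge k hk hkc]

theorem mul_emod_ne_zero (h : ResidueSumEq c a b d) (hk : 0 < k) (hkc : k < c) :
    k * a % c ≠ 0 := by
  intro h0
  have hc : 0 < c := hk.trans hkc
  have := sub_mul_emod_eq_zero h0
  have := mul_emod_add_sub_mul_emod_le (k := k) (x := b) hc
  have := mul_emod_add_sub_mul_emod_le (k := k) (x := d) hc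
  linarith [h k hk hkc, h (c - k) (by omega) (by omega)]

theorem gcd_eq_one (h : ResidueSumEq c a b d) (hc : 0 < c) : Int.gcd a c = 1 :=
  gcd_eq_one_of_forall_mul_emod_ne_zero hc fun _ => h.mul_emod_ne_zero

theorem add_add_eq (h : ResidueSumEq c a b d) (ha : 0 ≤ a) (hac : a < c) (hb : 0 ≤ b)
    (hbc : b < c) (hd : 0 ≤ d) (hdc : d < c) (hc : 1 < c) : a + b + d = c + 1 := by
  have := h 1 one_pos hc
  rwa [one_mul, one_mul, one_mul, Int.emod_eq_of_lt ha hac, Int.emod_eq_of_lt hb hbc,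
    Int.emod_eq_of_lt hd hdc, add_comm 1] at this

theorem not_lt_and_lt (h : ResidueSumEq c a b d) (ha : 0 ≤ a) (hac : a < c) (hb : 0 ≤ b)
    (hbc : b < c) (hd : 0 ≤ d) (hdc : d < c) (hk : 2 ≤ k) (hkc : k < c) :
    ¬(k * a % c < a ∧ k * b % c < b) := by
  rintro ⟨hwa, hwb⟩
  have hc : 0 < c := by omega
  have := mul_emod_of_lt_self hc ha hac hwa
  have := mul_emod_of_lt_self hc hb hbc hwb
  have := h.add_add_eq ha hac hb hbc hd hdc (by omega)
  have := h k (by omega) hkc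
  have := h (k - 1) (by omega) (by omega)
  rcases lt_or_ge (k * d % c) d with hwd | hwd
  · linarith [mul_emod_of_lt_self hc hd hdc hwd]
  · linarith [mul_emod_of_self_le hc hd hdc hwd]

theorem lt_or_lt_or_lt (h : ResidueSumEq c a b d) (ha : 0 ≤ a) (hac : a < c) (hb : 0 ≤ b)
    (hbc : b < c) (hd : 0 ≤ d) (hdc : d < c) (hk : 2 ≤ k) (hkc : k < c) :
    k * a % c < a ∨ k * b % c < b ∨ k * d % c < d := by
  by_contra! hw
  have hc : 0 < c := by omega
  have := mul_emod_of_self_le hc ha hac hw.1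
  have := mul_emod_of_self_le hc hb hbc hw.2.1
  have := mul_emod_of_self_le hc hd hdc hw.2.2
  have := h.add_add_eq ha hac hb hbc hd hdc (by omega)
  linarith [h k (by omega) hkc, h (k - 1) (by omega) (by omega)]

theorem mul_emod_lt_sub_of_dvd {A B D e j : ℤ} (h : ResidueSumEq c A B D) (hA : 0 ≤ A)
    (hAc : A < c) (hB : 0 ≤ B) (hBc : B < c) (hD : 0 ≤ D) (hDc : D < c)
    (he : c ∣ B * e + A) (hj : 0 < j) (hjB : j < B) : j * e % c < c - A := by
  have hc : 0 < c := by omega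
  -- `k ≡ j / B (mod c)`, so `B` wraps around at `k`
  obtain ⟨u, v, huv⟩ := Int.isCoprime_iff_gcd_eq_one.2 (h.swap₁₂.gcd_eq_one hc)
  set k := j * u % c
  have hkB : k * B % c = j := by
    refine emod_eq_of_dvd_sub hc ?_ hj.le (by omega)
    have : j - k * B = j * v * c + (j * u - k) * B := by linear_combination -j * huv
    rw [this]
    exact dvd_add (dvd_mul_left c _) (Int.dvd_self_sub_emod.mul_right B)
  have hk0 : 0 ≤ k := Int.emod_nonneg _ hc.ne'
  have hkc : k < c := Int.emod_lt_of_pos _ hc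
  have hk2 : 2 ≤ k := by
    rcases (show k = 0 ∨ k = 1 ∨ 2 ≤ k by omega) with h0 | h1 | h2
    · rw [h0, zero_mul, Int.zero_emod] at hkB; omega
    · rw [h1, one_mul, Int.emod_eq_of_lt hB hBc] at hkB; omega
    · exact h2
  -- hence `A` does not, and `k A ≢ A` because `(k - 1) A ≢ 0`
  have hAk : A < k * A % c := by
    have hle : A ≤ k * A % c := by
      by_contra! hlt
      exact h.not_lt_and_lt hA hAc hB hBc hD hDc hk2 hkc ⟨hlt, by omega⟩
    refine lt_of_le_of_ne hle fun hAeq => h.mul_emod_ne_zero (k := k - 1) (by omega) (by omega) ?_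
    rw [sub_one_mul]
    exact Int.emod_eq_emod_iff_emod_sub_eq_zero.1 (hAeq.symm.trans (Int.emod_eq_of_lt hA hAc).symm)
  -- `j e ≡ k B e ≡ -k A (mod c)`
  have hjk : c ∣ j * e + k * A := by
    have hjB : c ∣ j - k * B := hkB ▸ Int.dvd_emod_sub_self
    rw [show j * e + k * A = (j - k * B) * e + k * (B * e + A) by ring]
    exact dvd_add (hjB.mul_right e) (he.mul_left k)
  have hje : j * e % c = c - k * A % c := by
    refine emod_eq_of_dvd_sub hc ?_ (by linarith [Int.emod_lt_of_pos (k * A) hc]) (by omega)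
    rw [show c - k * A % c - j * e = c - (j * e + k * A) - (k * A % c - k * A) by ring]
    exact dvd_sub (dvd_sub dvd_rfl hjk) Int.dvd_emod_sub_self
  omega

theorem lt_of_two_mul_emod_lt {A B D : ℤ} (h : ResidueSumEq c A B D) (hA : 0 ≤ A)
    (hAc : A < c) (hB : 2 ≤ B) (hBc : B < c) (hD : 2 ≤ D) (hDc : D < c)
    (hwrap : 2 * A % c < A) : B < D := by
  have hc : 0 < c := by omega
  have hsum := h.add_add_eq hA hAc (by omega) hBc (by omega) hDc (by omega)
  have hcA : c ≤ 2 * A := by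
    by_contra! hlt
    rw [Int.emod_eq_of_lt (by omega) hlt] at hwrap
    omega
  -- `e ≡ -A / B (mod c)`
  obtain ⟨u, v, huv⟩ := Int.isCoprime_iff_gcd_eq_one.2 (h.swap₁₂.gcd_eq_one hc)
  set e := -(u * A) % c
  have he0 : 0 ≤ e := Int.emod_nonneg _ hc.ne'
  have hec : e < c := Int.emod_lt_of_pos _ hc
  have he : c ∣ B * e + A := by
    rw [show B * e + A = B * (e - -(u * A)) + A * v * c by linear_combination -A * huv]
    exact dvd_add (Int.dvd_emod_sub_self.mul_left B) (dvd_mul_left c _)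
  have hmul : ∀ j, 0 < j → j ≤ B - 1 → j * e % c ≤ c - 1 - A := fun j hj hjB => by
    have := h.mul_emod_lt_sub_of_dvd hA hAc (by omega) hBc (by omega) hDc he hj (by omega)
    omega
  have hBe_le := mul_le_of_forall_mul_emod_le he0 hec (by omega) hmul (j := B - 1) (by omega) le_rfl
  have he_le := mul_le_of_forall_mul_emod_le he0 hec (by omega) hmul (j := 1) one_pos (by omega)
  -- `B e = (B - 1) e + e ≤ 2 (c - 1 - A) < c` is its own residue
  have hBe : B * e = c - A := by
    rw [← Int.emod_eq_of_lt (a := B * e) (b := c) (by positivity)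
      (by linarith [show B * e = (B - 1) * e + 1 * e by ring])]
    refine emod_eq_of_dvd_sub hc ?_ (by omega) (by omega)
    rw [show c - A - B * e = c - (B * e + A) by ring]
    exact dvd_sub dvd_rfl he
  have he2 : 2 ≤ e := by nlinarith
  nlinarith

theorem le_two_mul_emod {A B D : ℤ} (h : ResidueSumEq c A B D) (hA : 0 ≤ A) (hAc : A < c)
    (hB : 2 ≤ B) (hBc : B < c) (hD : 2 ≤ D) (hDc : D < c) : A ≤ 2 * A % c := by
  by_contra! hwrap
  exact (h.lt_of_two_mul_emod_lt hA hAc hB hBc hD hDc hwrap).asymm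
    (h.swap₂₃.lt_of_two_mul_emod_lt hA hAc hD hDc hB hBc hwrap)

theorem eq_one_or (h : ResidueSumEq c a b d) (ha : 0 ≤ a) (hac : a < c) (hb : 0 ≤ b)
    (hbc : b < c) (hd : 0 ≤ d) (hdc : d < c) (hc : 1 < c) : a = 1 ∨ b = 1 ∨ d = 1 := by
  by_contra! hne
  have hpos : ∀ {x y z : ℤ}, ResidueSumEq c x y z → 0 ≤ x → x < c → x ≠ 0 := fun hx hx0 hxc => by
    simpa [Int.emod_eq_of_lt hx0 hxc] using hx.mul_emod_ne_zero one_pos hc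
  have ha2 : 2 ≤ a := by have := hpos h ha hac; omega
  have hb2 : 2 ≤ b := by have := hpos h.swap₁₂ hb hbc; omega
  have hd2 : 2 ≤ d := by have := hpos h.swap₂₃.swap₁₂ hd hdc; omega
  have := h.add_add_eq ha hac hb hbc hd hdc hc
  rcases h.lt_or_lt_or_lt ha hac hb hbc hd hdc le_rfl (by omega) with hw | hw | hw
  · exact hw.not_ge (h.le_two_mul_emod ha hac hb2 hbc hd2 hdc)
  · exact hw.not_ge (h.swap₁₂.le_two_mul_emod hb hbc ha2 hac hd2 hdc)
  · exact hw.not_ge (h.swap₂₃.swap₁₂.le_two_mul_emod hd hdc ha2 hac hb2 hbc)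

end ResidueSumEq

/-- **White's theorem, necessity.** If `0 ≤ a, b < c`, `d = (1 - a - b) mod c`, and the
tetrahedron `T_{a,b,c}` is empty, then `gcd(a,c) = gcd(b,c) = gcd(d,c) = 1` and at least one
of `a = 1`, `b = 1`, `c = 1`, `d = 1` holds. -/
theorem stmt_2 (a b c d : ℤ) (ha : 0 ≤ a) (hac : a < c) (hb : 0 ≤ b) (hbc : b < c)
    (hd : d = (1 - a - b) % c)
    (hempty : TetIsEmpty a b c) :
    Int.gcd a c = 1 ∧ Int.gcd b c = 1 ∧ Int.gcd d c = 1 ∧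
      (a = 1 ∨ b = 1 ∨ c = 1 ∨ d = 1) := by
  have hc : 0 < c := by omega
  have hd0 : 0 ≤ d := hd ▸ Int.emod_nonneg _ hc.ne'
  have hdc : d < c := hd ▸ Int.emod_lt_of_pos _ hc
  have hsum : c ∣ a + b + d - 1 := by
    rw [hd, show a + b + (1 - a - b) % c - 1 = (1 - a - b) % c - (1 - a - b) by ring]
    exact Int.dvd_emod_sub_self
  have h : ResidueSumEq c a b d := .of_lt_mul_emod_add_mul_emod hc hsum
    fun _ hk hkc => hempty.lt_mul_emod_add_mul_emod hk hkc
  refine ⟨h.gcd_eq_one hc, h.swap₁₂.gcd_eq_one hc, h.swap₂₃.swap₁₂.gcd_eq_one hc, ?_⟩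
  rcases (show c = 1 ∨ 1 < c by omega) with hc1 | hc1
  · exact .inr (.inr (.inl hc1))
  · rcases h.eq_one_or ha hac hb hbc hd0 hdc hc1 with h1 | h1 | h1 <;> simp [h1]
end

section
/- Let a, b, c be integers with 0 ≤ a, b < c, c ≥ 1. If the tetrahedron T_{a,b,c} is empty, then the open parallelepiped {s(1,0,0) + t(0,1,0) + u(a,b,c) : 0 < s, t, u < 1} contains exactly c − 1 points of ℤ³. -/
/-- The closed parallelepiped `P_{a,b,c}` spanned by `(1,0,0)`, `(0,1,0)`, `(a,b,c)`. -/
def Par (a b c : ℤ) : Set (Fin 3 → ℝ) :=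
  {x | ∃ s t u : ℝ, 0 ≤ s ∧ s ≤ 1 ∧ 0 ≤ t ∧ t ≤ 1 ∧ 0 ≤ u ∧ u ≤ 1 ∧
    x = s • ![1, 0, 0] + t • ![0, 1, 0] + u • ![(a : ℝ), (b : ℝ), (c : ℝ)]}

/-- The open parallelepiped spanned by `(1,0,0)`, `(0,1,0)`, `(a,b,c)`. -/
def OpenPar (a b c : ℤ) : Set (Fin 3 → ℝ) :=
  {x | ∃ s t u : ℝ, 0 < s ∧ s < 1 ∧ 0 < t ∧ t < 1 ∧ 0 < u ∧ u < 1 ∧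
    x = s • ![1, 0, 0] + t • ![0, 1, 0] + u • ![(a : ℝ), (b : ℝ), (c : ℝ)]}

/-!
A lattice point of the open parallelepiped has height `k = c u` with `0 < k < c`, and its first
two coordinates are then forced to be `⌊k a / c⌋ + 1` and `⌊k b / c⌋ + 1`; this point lies in the
open parallelepiped exactly when `c ∤ k a` and `c ∤ k b`. Emptiness rules out `c ∣ k a` (and
symmetrically `c ∣ k b`): the residues of `-k b` and `-(c - k) b` modulo `c` sum to at most `c`,
so for one of the heights `k' ∈ {k, c - k}` the residue `r` of `-k' b` satisfies `r + k' ≤ c`, and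
then `(k' / c) (a, b, c) + (r / c) (0, 1, 0)` is a lattice point of `T_{a,b,c}` at height strictly
between `0` and `c`.
-/

lemma smul_add_smul_add_smul_eq (s t u : ℝ) (a b c : ℤ) :
    s • ![(1 : ℝ), 0, 0] + t • ![0, 1, 0] + u • ![(a : ℝ), (b : ℝ), (c : ℝ)] =
      ![s + u * a, t + u * b, u * c] := by
  ext i
  fin_cases i <;> simp

lemma isLatticePt_intCast (m n k : ℤ) : IsLatticePt ![(m : ℝ), (n : ℝ), (k : ℝ)] := by
  intro i
  fin_cases i
  exacts [⟨m, rfl⟩, ⟨n, rfl⟩, ⟨k, rfl⟩]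

lemma smul_add_smul_add_smul_mem_tet (a b c : ℤ) {α β γ : ℝ} (hα : 0 ≤ α) (hβ : 0 ≤ β)
    (hγ : 0 ≤ γ) (hαβγ : α + β + γ ≤ 1) :
    α • ![(1 : ℝ), 0, 0] + β • ![0, 1, 0] + γ • ![(a : ℝ), (b : ℝ), (c : ℝ)] ∈ Tet a b c := by
  have hmem := (convex_convexHull ℝ ({![0, 0, 0], ![1, 0, 0], ![0, 1, 0],
    ![(a : ℝ), (b : ℝ), (c : ℝ)]} : Set (Fin 3 → ℝ))).sum_mem (t := Finset.univ)
    (w := ![1 - α - β - γ, α, β, γ])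
    (z := ![![0, 0, 0], ![1, 0, 0], ![0, 1, 0], ![(a : ℝ), (b : ℝ), (c : ℝ)]])
    (fun i _ ↦ by fin_cases i <;> simp <;> linarith)
    (by simp [Fin.sum_univ_four]; ring)
    (fun i _ ↦ subset_convexHull ℝ _ (by fin_cases i <;> simp))
  simpa [Tet, Fin.sum_univ_four] using hmem

lemma Int.dvd_neg_emod_add (c x : ℤ) : c ∣ (-x) % c + x :=
  ⟨-((-x) / c), by rw [Int.emod_def]; ring⟩

lemma Int.emod_add_emod_le_of_dvd_add {c x y : ℤ} (hc : 0 < c) (h : c ∣ x + y) :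
    x % c + y % c ≤ c := by
  obtain ⟨q, hq⟩ : c ∣ x % c + y % c := by
    rw [Int.dvd_iff_emod_eq_zero, ← Int.add_emod]
    exact Int.emod_eq_zero_of_dvd h
  have := Int.emod_nonneg x hc.ne'
  have := Int.emod_nonneg y hc.ne'
  have := Int.emod_lt_of_pos x hc
  have := Int.emod_lt_of_pos y hc
  have hq1 : q ≤ 1 := by nlinarith
  nlinarith

lemma Int.exists_height_emod_add_le {c k : ℤ} (hk0 : 0 < k) (hkc : k < c) (b : ℤ) :
    ∃ k' r, (k' = k ∨ k' = c - k) ∧ 0 ≤ r ∧ r + k' ≤ c ∧ c ∣ r + k' * b := by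
  have hc : 0 < c := hk0.trans hkc
  have hsum : (-(k * b)) % c + (-((c - k) * b)) % c ≤ c :=
    Int.emod_add_emod_le_of_dvd_add hc ⟨-b, by ring⟩
  by_cases h : (-(k * b)) % c + k ≤ c
  · exact ⟨k, _, .inl rfl, Int.emod_nonneg _ hc.ne', h, Int.dvd_neg_emod_add c _⟩
  · exact ⟨c - k, _, .inr rfl, Int.emod_nonneg _ hc.ne', by omega, Int.dvd_neg_emod_add c _⟩

lemma Int.exists_add_div_eq_iff {c : ℤ} (hc : 0 < c) (n m : ℤ) :
    (∃ s : ℝ, 0 < s ∧ s < 1 ∧ s + n / c = m) ↔ ¬ c ∣ n ∧ n / c + 1 = m := by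
  have hcR : (0 : ℝ) < c := by exact_mod_cast hc
  constructor
  · rintro ⟨s, hs0, hs1, hs⟩
    have hn : (n : ℝ) = (m - s) * c := by field_simp at hs; linarith
    have hlo : (m - 1) * c < n := by
      have : ((m - 1) * c : ℝ) < n := by rw [hn]; nlinarith
      exact_mod_cast this
    have hhi : n < m * c := by
      have : (n : ℝ) < m * c := by rw [hn]; nlinarith
      exact_mod_cast this
    refine ⟨?_, ?_⟩
    · rintro ⟨q, rfl⟩
      have : m - 1 < q := lt_of_mul_lt_mul_right (by linarith) hc.le
      have : q < m := lt_of_mul_lt_mul_right (by linarith) hc.le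
      omega
    · have : n / c = m - 1 := (Int.ediv_eq_iff_of_pos hc).2 ⟨hlo.le, by linarith⟩
      omega
  · rintro ⟨hn, rfl⟩
    have hr0 : 0 < n % c :=
      (Int.emod_nonneg n hc.ne').lt_of_ne' (fun h ↦ hn (Int.dvd_of_emod_eq_zero h))
    have hrc : n % c < c := Int.emod_lt_of_pos n hc
    have hdiv : (n : ℝ) = c * (n / c : ℤ) + (n % c : ℤ) := by
      exact_mod_cast (Int.mul_ediv_add_emod n c).symm
    refine ⟨1 - (n % c : ℤ) / c, ?_, ?_, ?_⟩
    · rw [sub_pos, div_lt_one hcR]; exact_mod_cast hrc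
    · rw [sub_lt_self_iff]; exact div_pos (by exact_mod_cast hr0) hcR
    · rw [hdiv]; push_cast; field_simp; ring

lemma TetIsEmpty.not_dvd_and_dvd {a b c : ℤ} (hempty : TetIsEmpty a b c) {k p q : ℤ}
    (hk0 : 0 < k) (hkc : k < c) (hp : 0 ≤ p) (hq : 0 ≤ q) (hpqk : p + q + k ≤ c) :
    ¬ (c ∣ p + k * a ∧ c ∣ q + k * b) := by
  rintro ⟨⟨m, hm⟩, ⟨n, hn⟩⟩
  have hcR : (0 : ℝ) < c := by exact_mod_cast hk0.trans hkc
  have hmem := smul_add_smul_add_smul_mem_tet a b c (α := p / c) (β := q / c) (γ := k / c)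
    (by positivity) (by positivity) (by positivity)
    (by rw [← add_div, ← add_div, div_le_one hcR]; exact_mod_cast hpqk)
  have hmR : (p : ℝ) + k * a = c * m := by exact_mod_cast hm
  have hnR : (q : ℝ) + k * b = c * n := by exact_mod_cast hn
  have hx : ![(p : ℝ) / c + k / c * a, q / c + k / c * b, k / c * c] = ![(m : ℝ), n, k] := by
    ext i
    fin_cases i <;> simp <;> field_simp <;> linarith
  rw [smul_add_smul_add_smul_eq, hx] at hmem
  rcases hempty _ hmem (isLatticePt_intCast m n k) with h | h | h | h <;>
    · have := congrFun h 2
      simp at this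
      omega

lemma TetIsEmpty.not_dvd_mul_left {a b c k : ℤ} (hempty : TetIsEmpty a b c) (hk0 : 0 < k)
    (hkc : k < c) : ¬ c ∣ k * a := by
  intro hka
  obtain ⟨k', r, hk', hr, hrk, hdvd⟩ := Int.exists_height_emod_add_le hk0 hkc b
  have hk'a : c ∣ k' * a := by
    rcases hk' with rfl | rfl
    exacts [hka, by simpa [sub_mul] using dvd_sub (dvd_mul_right c a) hka]
  exact hempty.not_dvd_and_dvd (p := 0) (q := r) (by omega) (by omega) le_rfl hr (by omega)
    ⟨by simpa using hk'a, hdvd⟩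

lemma TetIsEmpty.not_dvd_mul_right {a b c k : ℤ} (hempty : TetIsEmpty a b c) (hk0 : 0 < k)
    (hkc : k < c) : ¬ c ∣ k * b := by
  intro hkb
  obtain ⟨k', r, hk', hr, hrk, hdvd⟩ := Int.exists_height_emod_add_le hk0 hkc a
  have hk'b : c ∣ k' * b := by
    rcases hk' with rfl | rfl
    exacts [hkb, by simpa [sub_mul] using dvd_sub (dvd_mul_right c b) hkb]
  exact hempty.not_dvd_and_dvd (p := r) (q := 0) (by omega) (by omega) hr le_rfl (by omega)
    ⟨hdvd, by simpa using hk'b⟩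

/-- The only candidate for a lattice point of `OpenPar a b c` at height `k`. -/
def openParLatticePt (a b c k : ℤ) : Fin 3 → ℝ :=
  ![((k * a / c + 1 : ℤ) : ℝ), ((k * b / c + 1 : ℤ) : ℝ), (k : ℝ)]

lemma openParLatticePt_injective (a b c : ℤ) : Function.Injective (openParLatticePt a b c) :=
  fun k l h ↦ by simpa [openParLatticePt] using congrFun h 2

lemma mem_openPar_and_isLatticePt_iff {a b c : ℤ} (hc : 0 < c) (x : Fin 3 → ℝ) :
    x ∈ OpenPar a b c ∧ IsLatticePt x ↔
      ∃ k ∈ Set.Ioo 0 c, ¬ c ∣ k * a ∧ ¬ c ∣ k * b ∧ openParLatticePt a b c k = x := by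
  have hcR : (0 : ℝ) < c := by exact_mod_cast hc
  constructor
  · rintro ⟨⟨s, t, u, hs0, hs1, ht0, ht1, hu0, hu1, rfl⟩, hlat⟩
    rw [smul_add_smul_add_smul_eq] at hlat ⊢
    obtain ⟨m, hm⟩ := hlat 0
    obtain ⟨n, hn⟩ := hlat 1
    obtain ⟨k, hk⟩ := hlat 2
    simp only [Matrix.cons_val] at hm hn hk
    have hu : u = k / c := by field_simp; linarith
    subst hu
    have hk0 : 0 < k := by
      have : (0 : ℝ) < k := (div_pos_iff_of_pos_right hcR).1 hu0
      exact_mod_cast this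
    have hkc : k < c := by
      have : (k : ℝ) < c := by rwa [div_lt_one hcR] at hu1
      exact_mod_cast this
    obtain ⟨hka, hm'⟩ := (Int.exists_add_div_eq_iff hc (k * a) m).1
      ⟨s, hs0, hs1, by push_cast; rw [← hm]; ring⟩
    obtain ⟨hkb, hn'⟩ := (Int.exists_add_div_eq_iff hc (k * b) n).1
      ⟨t, ht0, ht1, by push_cast; rw [← hn]; ring⟩
    refine ⟨k, ⟨hk0, hkc⟩, hka, hkb, ?_⟩
    rw [openParLatticePt, hm', hn', hm, hn, hk]
  · rintro ⟨k, ⟨hk0, hkc⟩, hka, hkb, rfl⟩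
    obtain ⟨s, hs0, hs1, hs⟩ := (Int.exists_add_div_eq_iff hc (k * a) _).2 ⟨hka, rfl⟩
    obtain ⟨t, ht0, ht1, ht⟩ := (Int.exists_add_div_eq_iff hc (k * b) _).2 ⟨hkb, rfl⟩
    refine ⟨⟨s, t, k / c, hs0, hs1, ht0, ht1, by positivity,
      by rw [div_lt_one hcR]; exact_mod_cast hkc, ?_⟩, isLatticePt_intCast _ _ _⟩
    rw [smul_add_smul_add_smul_eq, openParLatticePt, ← hs, ← ht]
    ext i
    fin_cases i <;> simp <;> field_simp

theorem stmt_3_general (a b c : ℤ) (hc : 1 ≤ c) (hempty : TetIsEmpty a b c) :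
    {x : Fin 3 → ℝ | x ∈ OpenPar a b c ∧ IsLatticePt x}.ncard = (c - 1).toNat := by
  have hc0 : 0 < c := hc
  have hset : {x : Fin 3 → ℝ | x ∈ OpenPar a b c ∧ IsLatticePt x} =
      openParLatticePt a b c '' Set.Ioo 0 c :=
    Set.ext fun x ↦ (mem_openPar_and_isLatticePt_iff hc0 x).trans <|
      exists_congr fun k ↦ and_congr_right fun ⟨hk0, hkc⟩ ↦ ⟨fun h ↦ h.2.2,
        fun h ↦ ⟨hempty.not_dvd_mul_left hk0 hkc, hempty.not_dvd_mul_right hk0 hkc, h⟩⟩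
  rw [hset, Set.ncard_image_of_injective _ (openParLatticePt_injective a b c), ← Finset.coe_Ioo,
    Set.ncard_coe_finset, Int.card_Ioo, sub_zero]

/-- If `0 ≤ a, b < c`, `c ≥ 1`, and the tetrahedron `T_{a,b,c}` is empty, then the open
parallelepiped `{s(1,0,0) + t(0,1,0) + u(a,b,c) : 0 < s, t, u < 1}` contains exactly
`c - 1` points of `ℤ³`. -/
theorem stmt_3 (a b c : ℤ) (ha : 0 ≤ a) (hac : a < c) (hb : 0 ≤ b) (hbc : b < c)
    (hc : 1 ≤ c) (hempty : TetIsEmpty a b c) :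
    {x : Fin 3 → ℝ | x ∈ OpenPar a b c ∧ IsLatticePt x}.ncard = (c - 1).toNat :=
  stmt_3_general a b c hc hempty
end

section
/- Let a, b, c be integers with 0 ≤ a, b < c and d = (1−a−b) mod c. If d = 1 and the tetrahedron T_{a,b,c} is empty, then every point of ℤ³ lying in the interior of the parallelepiped P_{a,b,c} lies on the plane x + y − z = 1. -/
open Set

noncomputable def parEquiv (a b c : ℤ) (hc : (c : ℝ) ≠ 0) : (Fin 3 → ℝ) ≃L[ℝ] (Fin 3 → ℝ) :=
  let M : Matrix (Fin 3) (Fin 3) ℝ := !![1, 0, (a : ℝ); 0, 1, (b : ℝ); 0, 0, (c : ℝ)]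
  have hM : IsUnit M.det := by simpa [M, Matrix.det_fin_three] using hc
  (M.toLinearEquiv' (M.invertibleOfIsUnitDet hM)).toContinuousLinearEquiv

lemma parEquiv_apply (a b c : ℤ) (hc : (c : ℝ) ≠ 0) (p : Fin 3 → ℝ) :
    parEquiv a b c hc p =
      p 0 • ![1, 0, 0] + p 1 • ![0, 1, 0] + p 2 • ![(a : ℝ), (b : ℝ), (c : ℝ)] := by
  rw [parEquiv, LinearEquiv.coe_toContinuousLinearEquiv', ← LinearEquiv.coe_coe,
    Matrix.toLinearEquiv'_apply, Matrix.toLin'_apply]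
  ext i
  fin_cases i <;> simp [Matrix.mulVec, dotProduct, Fin.sum_univ_three, mul_comm]

lemma image_parEquiv_pi (a b c : ℤ) (hc : (c : ℝ) ≠ 0) (I : Set ℝ) :
    parEquiv a b c hc '' univ.pi (fun _ => I) = {x | ∃ s t u : ℝ, s ∈ I ∧ t ∈ I ∧ u ∈ I ∧
      x = s • ![1, 0, 0] + t • ![0, 1, 0] + u • ![(a : ℝ), (b : ℝ), (c : ℝ)]} := by
  ext x
  simp only [mem_image, mem_univ_pi, parEquiv_apply, mem_ofPred_eq]
  constructor
  · rintro ⟨p, hp, rfl⟩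
    exact ⟨p 0, p 1, p 2, hp 0, hp 1, hp 2, rfl⟩
  · rintro ⟨s, t, u, hs, ht, hu, rfl⟩
    exact ⟨![s, t, u], fun i => by fin_cases i <;> assumption, rfl⟩

lemma interior_par (a b c : ℤ) (hc : (c : ℝ) ≠ 0) : interior (Par a b c) = OpenPar a b c := by
  have hPar : Par a b c = parEquiv a b c hc '' univ.pi (fun _ => Icc 0 1) := by
    simp only [image_parEquiv_pi, mem_Icc, and_assoc]; rfl
  have hOpenPar : OpenPar a b c = parEquiv a b c hc '' univ.pi (fun _ => Ioo 0 1) := by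
    simp only [image_parEquiv_pi, mem_Ioo, and_assoc]; rfl
  rw [hPar, hOpenPar, ← ContinuousLinearEquiv.coe_toHomeomorph, ← Homeomorph.image_interior,
    interior_pi_set finite_univ]
  simp only [interior_Icc]

lemma smul_add_smul_add_smul_eq_vec (a b c : ℤ) (s t u : ℝ) :
    s • ![(1 : ℝ), 0, 0] + t • ![0, 1, 0] + u • ![(a : ℝ), (b : ℝ), (c : ℝ)]
      = ![s + u * a, t + u * b, u * c] := by
  ext i
  fin_cases i <;> simp

lemma not_isLatticePt_of_mem_openPar_zero_zero {c : ℤ} {x : Fin 3 → ℝ}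
    (hx : x ∈ OpenPar 0 0 c) : ¬ IsLatticePt x := by
  intro hlat
  obtain ⟨s, t, u, hs0, hs1, -, -, -, -, rfl⟩ := hx
  obtain ⟨m, hm⟩ := hlat 0
  have hsm : s = m := by simpa using hm
  have h0 : (0 : ℤ) < m := by exact_mod_cast hsm ▸ hs0
  have h1 : m < 1 := by exact_mod_cast hsm ▸ hs1
  omega

lemma add_sub_eq_one_of_mem_openPar {a b c : ℤ} (hab : a + b = c) {x : Fin 3 → ℝ}
    (hx : x ∈ OpenPar a b c) (hlat : IsLatticePt x) : x 0 + x 1 - x 2 = 1 := by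
  obtain ⟨m0, hm0⟩ := hlat 0
  obtain ⟨m1, hm1⟩ := hlat 1
  obtain ⟨m2, hm2⟩ := hlat 2
  obtain ⟨s, t, u, hs0, hs1, ht0, ht1, -, -, rfl⟩ := hx
  have habR : (a : ℝ) + b = c := by exact_mod_cast hab
  have hst : ((m0 + m1 - m2 : ℤ) : ℝ) = s + t := by
    push_cast [← hm0, ← hm1, ← hm2]
    rw [smul_add_smul_add_smul_eq_vec]
    simp only [Matrix.cons_val_zero, Matrix.cons_val_one, Matrix.cons_val_two, Matrix.tail_cons,
      Matrix.head_cons]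
    linear_combination u * habR
  have h0 : 0 < m0 + m1 - m2 := by exact_mod_cast (hst ▸ (by linarith : (0 : ℝ) < s + t))
  have h2 : m0 + m1 - m2 < 2 := by exact_mod_cast (hst ▸ (by linarith : s + t < (2 : ℝ)))
  rw [hm0, hm1, hm2]
  exact_mod_cast (by omega : m0 + m1 - m2 = 1)

lemma add_eq_zero_or_eq_of_dvd {a b c : ℤ} (ha : 0 ≤ a) (hac : a < c) (hb : 0 ≤ b) (hbc : b < c)
    (hdvd : c ∣ a + b) : a + b = 0 ∨ a + b = c := by
  obtain ⟨k, hk⟩ := hdvd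
  have hk0 : 0 ≤ k := by nlinarith
  have hk2 : k < 2 := by nlinarith
  interval_cases k <;> simp_all

theorem stmt_6_general (a b c d : ℤ) (ha : 0 ≤ a) (hac : a < c) (hb : 0 ≤ b) (hbc : b < c)
    (hd : d = (1 - a - b) % c) (hd1 : d = 1) :
    ∀ x ∈ interior (Par a b c), IsLatticePt x → x 0 + x 1 - x 2 = 1 := by
  intro x hx hlat
  have hc : 0 < c := ha.trans_lt hac
  rw [interior_par a b c (by exact_mod_cast hc.ne')] at hx
  have hdvd : c ∣ a + b := by
    refine ⟨-((1 - a - b) / c), ?_⟩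
    linear_combination Int.emod_add_mul_ediv (1 - a - b) c - hd.symm.trans hd1
  rcases add_eq_zero_or_eq_of_dvd ha hac hb hbc hdvd with hab | hab
  · obtain ⟨rfl, rfl⟩ : a = 0 ∧ b = 0 := by omega
    exact absurd hlat (not_isLatticePt_of_mem_openPar_zero_zero hx)
  · exact add_sub_eq_one_of_mem_openPar hab hx hlat

/-- If `0 ≤ a, b < c`, `d = (1 - a - b) mod c`, `d = 1` and the tetrahedron `T_{a,b,c}` is
empty, then every point of `ℤ³` lying in the interior of the parallelepiped `P_{a,b,c}`
lies on the plane `x + y - z = 1`. -/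
theorem stmt_6 (a b c d : ℤ) (ha : 0 ≤ a) (hac : a < c) (hb : 0 ≤ b) (hbc : b < c)
    (hd : d = (1 - a - b) % c) (hd1 : d = 1)
    (hempty : TetIsEmpty a b c) :
    ∀ x ∈ interior (Par a b c), IsLatticePt x → x 0 + x 1 - x 2 = 1 :=
  stmt_6_general a b c d ha hac hb hbc hd hd1
end

section
/- Let u, v be two linearly independent vectors in ℤ³. Then the parallelogram {su + tv : 0 ≤ s, t ≤ 1} contains no point of ℤ³ other than its four vertices 0, u, v, u+v if and only if the greatest common divisor of the three coordinates of the cross product u × v equals 1. -/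
open Matrix

theorem isLatticePt_iff {x : Fin 3 → ℝ} :
    IsLatticePt x ↔ ∃ m : Fin 3 → ℤ, x = fun i => (m i : ℝ) := by
  simp only [IsLatticePt, Classical.skolem, funext_iff]

theorem intCast_crossProduct {K : Type*} [CommRing K] (a b : Fin 3 → ℤ) :
    (fun i => ((a ⨯₃ b) i : K)) = (fun i => (a i : K)) ⨯₃ (fun i => (b i : K)) := by
  ext i
  fin_cases i <;> simp [cross_apply]

theorem smul_add_smul_cross {R : Type*} [CommRing R] (s t : R) (a b : Fin 3 → R) :
    (s • a + t • b) ⨯₃ b = s • (a ⨯₃ b) := by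
  simp [cross_self]

theorem cross_smul_add_smul {R : Type*} [CommRing R] (s t : R) (a b : Fin 3 → R) :
    a ⨯₃ (s • a + t • b) = t • (a ⨯₃ b) := by
  simp [cross_self]

theorem exists_prime_forall_dvd_of_gcd_ne_one {w : Fin 3 → ℤ}
    (h : Int.gcd (w 0) (Int.gcd (w 1) (w 2)) ≠ 1) : ∃ p : ℕ, p.Prime ∧ ∀ i, (p : ℤ) ∣ w i := by
  obtain ⟨p, hp, hpd⟩ := Nat.exists_prime_and_dvd h
  have hpd : (p : ℤ) ∣ (Int.gcd (w 0) (Int.gcd (w 1) (w 2)) : ℤ) := Int.natCast_dvd_natCast.mpr hpd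
  have hp12 : (p : ℤ) ∣ (Int.gcd (w 1) (w 2) : ℤ) := hpd.trans (Int.gcd_dvd_right _ _)
  refine ⟨p, hp, fun i => ?_⟩
  fin_cases i
  · exact hpd.trans (Int.gcd_dvd_left _ _)
  · exact hp12.trans (Int.gcd_dvd_left _ _)
  · exact hp12.trans (Int.gcd_dvd_right _ _)

theorem exists_intCast_eq_of_smul_intCast_eq {K : Type*} [CommRing K] {w m : Fin 3 → ℤ}
    (hw : Int.gcd (w 0) (Int.gcd (w 1) (w 2)) = 1) {s : K}
    (h : s • (fun i => (w i : K)) = fun i => (m i : K)) : ∃ n : ℤ, s = n := by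
  obtain ⟨x, y, hxy⟩ := Int.isCoprime_iff_gcd_eq_one.mpr hw
  rw [Int.gcd_eq_gcd_ab] at hxy
  set A := Int.gcdA (w 1) (w 2)
  set B := Int.gcdB (w 1) (w 2)
  have hxyK : (x : K) * w 0 + y * (w 1 * A + w 2 * B) = 1 := by
    simpa using congrArg (Int.cast : ℤ → K) hxy
  have hm (i : Fin 3) : s * w i = m i := congrFun h i
  refine ⟨x * m 0 + y * (A * m 1 + B * m 2), ?_⟩
  push_cast
  linear_combination (-s) * hxyK + x * hm 0 + y * A * hm 1 + y * B * hm 2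

theorem exists_intCast_eq_of_smul_add_smul_eq_intCast {K : Type*} [CommRing K]
    {u v m : Fin 3 → ℤ} (huv : Int.gcd ((u ⨯₃ v) 0) (Int.gcd ((u ⨯₃ v) 1) ((u ⨯₃ v) 2)) = 1)
    {s t : K} (h : s • (fun i => (u i : K)) + t • (fun i => (v i : K)) = fun i => (m i : K)) :
    (∃ n : ℤ, s = n) ∧ ∃ n : ℤ, t = n := by
  constructor
  · refine exists_intCast_eq_of_smul_intCast_eq huv (m := m ⨯₃ v) ?_
    rw [intCast_crossProduct, intCast_crossProduct, ← h, smul_add_smul_cross]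
  · refine exists_intCast_eq_of_smul_intCast_eq huv (m := u ⨯₃ m) ?_
    rw [intCast_crossProduct, intCast_crossProduct, ← h, cross_smul_add_smul]

theorem LinearIndependent.smul_add_smul_mem_vertices_iff {R M : Type*} [Ring R]
    [AddCommGroup M] [Module R M] {a b : M} (h : LinearIndependent R ![a, b]) {s t : R} :
    (s • a + t • b = 0 ∨ s • a + t • b = a ∨ s • a + t • b = b ∨ s • a + t • b = a + b) ↔
      (s = 0 ∨ s = 1) ∧ (t = 0 ∨ t = 1) := by
  constructor
  · rintro (hx | hx | hx | hx)
    · obtain ⟨rfl, rfl⟩ := h.eq_of_pair (t' := 0) (s' := 0) (by simpa using hx)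
      simp
    · obtain ⟨rfl, rfl⟩ := h.eq_of_pair (t' := 0) (s' := 1) (by simpa using hx)
      simp
    · obtain ⟨rfl, rfl⟩ := h.eq_of_pair (t' := 1) (s' := 0) (by simpa using hx)
      simp
    · obtain ⟨rfl, rfl⟩ := h.eq_of_pair (t' := 1) (s' := 1) (by simpa using hx)
      simp
  · rintro ⟨rfl | rfl, rfl | rfl⟩ <;> simp

theorem eq_zero_or_eq_one_of_intCast {R : Type*} [Ring R] [LinearOrder R] [IsStrictOrderedRing R]
    {n : ℤ} (h0 : 0 ≤ (n : R)) (h1 : (n : R) ≤ 1) : (n : R) = 0 ∨ (n : R) = 1 := by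
  have : 0 ≤ n ∧ n ≤ 1 := ⟨by exact_mod_cast h0, by exact_mod_cast h1⟩
  obtain rfl | rfl : n = 0 ∨ n = 1 := by omega
  all_goals simp

theorem exists_dvd_add_of_dvd_crossProduct {p : ℕ} [Fact p.Prime] {u v : Fin 3 → ℤ}
    (h : ∀ i, (p : ℤ) ∣ (u ⨯₃ v) i) :
    ∃ a b : ℕ, a < p ∧ b < p ∧ (a ≠ 0 ∨ b ≠ 0) ∧ ∀ i, (p : ℤ) ∣ a * u i + b * v i := by
  have hcross : (fun i => (u i : ZMod p)) ⨯₃ (fun i => (v i : ZMod p)) = 0 := by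
    rw [← intCast_crossProduct]
    ext i
    exact (ZMod.intCast_zmod_eq_zero_iff_dvd _ p).mpr (h i)
  have hdep := mt crossProduct_ne_zero_iff_linearIndependent.mpr (not_not.mpr hcross)
  simp only [LinearIndependent.pair_iff, not_forall, not_and_or] at hdep
  obtain ⟨α, β, hαβ, hne⟩ := hdep
  refine ⟨α.val, β.val, α.val_lt, β.val_lt, by simpa [ZMod.val_eq_zero] using hne, fun i => ?_⟩
  rw [← ZMod.intCast_zmod_eq_zero_iff_dvd]
  simpa using congrFun hαβ i

theorem isLatticePt_div_smul_add_div_smul {p a b : ℕ} (hp : p ≠ 0) {u v : Fin 3 → ℤ}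
    (h : ∀ i, (p : ℤ) ∣ a * u i + b * v i) :
    IsLatticePt (((a : ℝ) / p) • (fun i => (u i : ℝ)) + ((b : ℝ) / p) • (fun i => (v i : ℝ))) := by
  intro i
  obtain ⟨k, hk⟩ := h i
  refine ⟨k, ?_⟩
  have hkR : (a : ℝ) * u i + b * v i = p * k := by exact_mod_cast hk
  simp only [Pi.add_apply, Pi.smul_apply, smul_eq_mul]
  field_simp
  linear_combination hkR

/-- For linearly independent `u, v ∈ ℤ³`, the parallelogram `{su + tv : 0 ≤ s, t ≤ 1}`
contains no point of `ℤ³` other than its four vertices `0, u, v, u + v` if and only if the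
gcd of the three coordinates of the cross product `u × v` equals `1`. -/
theorem stmt_8 (u v : Fin 3 → ℤ)
    (hli : LinearIndependent ℝ ![(fun i => (u i : ℝ)), (fun i => (v i : ℝ))]) :
    (∀ x : Fin 3 → ℝ,
        (∃ s t : ℝ, 0 ≤ s ∧ s ≤ 1 ∧ 0 ≤ t ∧ t ≤ 1 ∧
          x = s • (fun i => (u i : ℝ)) + t • (fun i => (v i : ℝ))) →
        IsLatticePt x →
        x = 0 ∨ x = (fun i => (u i : ℝ)) ∨ x = (fun i => (v i : ℝ)) ∨
          x = (fun i => (u i : ℝ)) + (fun i => (v i : ℝ))) ↔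
      Int.gcd (crossProduct u v 0) (Int.gcd (crossProduct u v 1) (crossProduct u v 2)) = 1 := by
  constructor
  · intro h
    by_contra hg
    obtain ⟨p, hp, hpuv⟩ := exists_prime_forall_dvd_of_gcd_ne_one hg
    have : Fact p.Prime := ⟨hp⟩
    obtain ⟨a, b, ha, hb, hab, hdvd⟩ := exists_dvd_add_of_dvd_crossProduct hpuv
    have hpR : (0 : ℝ) < p := by exact_mod_cast hp.pos
    have hcoeff {c : ℕ} (hc : c < p) : 0 ≤ (c : ℝ) / p ∧ (c : ℝ) / p < 1 :=
      ⟨by positivity, (div_lt_one hpR).mpr (by exact_mod_cast hc)⟩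
    have hvertex := hli.smul_add_smul_mem_vertices_iff.mp <|
      h _ ⟨_, _, (hcoeff ha).1, (hcoeff ha).2.le, (hcoeff hb).1, (hcoeff hb).2.le, rfl⟩
        (isLatticePt_div_smul_add_div_smul hp.ne_zero hdvd)
    have hzero {c : ℕ} (hc : c < p) (h01 : (c : ℝ) / p = 0 ∨ (c : ℝ) / p = 1) : c = 0 := by
      rcases h01 with h01 | h01
      · simpa [hpR.ne'] using h01
      · exact absurd h01 (hcoeff hc).2.ne
    exact hab.elim (· (hzero ha hvertex.1)) (· (hzero hb hvertex.2))
  · rintro hg x ⟨s, t, hs0, hs1, ht0, ht1, rfl⟩ hx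
    obtain ⟨m, hm⟩ := isLatticePt_iff.mp hx
    obtain ⟨⟨k, rfl⟩, ⟨l, rfl⟩⟩ := exists_intCast_eq_of_smul_add_smul_eq_intCast hg hm
    exact hli.smul_add_smul_mem_vertices_iff.mpr
      ⟨eq_zero_or_eq_one_of_intCast hs0 hs1, eq_zero_or_eq_one_of_intCast ht0 ht1⟩
end

section
/- Let a, c be integers with 0 ≤ a < c, c ≥ 1, and gcd(a,c) = 1. Then the tetrahedron T_{1,a,c} with vertices (0,0,0), (1,0,0), (0,1,0), (1,a,c) is empty. -/
/-!
`T_{1,a,c}` lies in the polyhedron cut out by its facet inequalities `0 ≤ z`, `z ≤ c x`,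
`a z ≤ c y` and `c (x + y) - a z ≤ c`. For a lattice point these force `x ∈ {0, 1}`. If `x = 0`,
then `z = 0` and `y ∈ {0, 1}`. If `x = 1`, the last two inequalities give `c y = a z` with
`0 ≤ z ≤ c`, so `c ∣ z` by coprimality and the point is `(1, 0, 0)` or `(1, a, c)`.
-/

def tetOneFacets (a c : ℝ) : Set (Fin 3 → ℝ) :=
  {y | 0 ≤ y 2 ∧ y 2 ≤ c * y 0 ∧ a * y 2 ≤ c * y 1 ∧ c * (y 0 + y 1) - a * y 2 ≤ c}

lemma convex_tetOneFacets (a c : ℝ) : Convex ℝ (tetOneFacets a c) := by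
  rintro u ⟨hu₁, hu₂, hu₃, hu₄⟩ v ⟨hv₁, hv₂, hv₃, hv₄⟩ p q hp hq hpq
  refine ⟨?_, ?_, ?_, ?_⟩ <;> simp only [Pi.add_apply, Pi.smul_apply, smul_eq_mul] <;>
    nlinarith [mul_nonneg hp hu₁, mul_nonneg hq hv₁,
      mul_le_mul_of_nonneg_left hu₂ hp, mul_le_mul_of_nonneg_left hv₂ hq,
      mul_le_mul_of_nonneg_left hu₃ hp, mul_le_mul_of_nonneg_left hv₃ hq,
      mul_le_mul_of_nonneg_left hu₄ hp, mul_le_mul_of_nonneg_left hv₄ hq]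

lemma tet_one_subset_tetOneFacets {a c : ℤ} (hc : 0 ≤ c) :
    Tet 1 a c ⊆ tetOneFacets a c := by
  have hcR : (0 : ℝ) ≤ c := by exact_mod_cast hc
  refine convexHull_min ?_ (convex_tetOneFacets a c)
  rintro p (rfl | rfl | rfl | rfl) <;> refine ⟨?_, ?_, ?_, ?_⟩ <;> simp [hcR] <;> linarith

lemma eq_zero_or_eq_of_mul_eq_mul_of_isCoprime {a c y z : ℤ} (hc : 0 < c) (hca : IsCoprime c a)
    (hz₀ : 0 ≤ z) (hzc : z ≤ c) (h : c * y = a * z) : (y = 0 ∧ z = 0) ∨ (y = a ∧ z = c) := by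
  obtain ⟨d, rfl⟩ : c ∣ z := hca.dvd_of_dvd_mul_left ⟨y, by linarith⟩
  have hd₀ : 0 ≤ d := nonneg_of_mul_nonneg_right hz₀ hc
  have hd₁ : d ≤ 1 := le_of_mul_le_mul_left (by linarith) hc
  interval_cases d
  · exact .inl ⟨by simpa [hc.ne'] using h, by simp⟩
  · exact .inr ⟨mul_left_cancel₀ hc.ne' (by linarith), by simp⟩

lemma tetOneFacets_int_cases {a c x y z : ℤ} (hc : 0 < c) (hca : IsCoprime c a)
    (h₁ : 0 ≤ z) (h₂ : z ≤ c * x) (h₃ : a * z ≤ c * y) (h₄ : c * (x + y) - a * z ≤ c) :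
    (x = 0 ∧ y = 0 ∧ z = 0) ∨ (x = 1 ∧ y = 0 ∧ z = 0) ∨ (x = 0 ∧ y = 1 ∧ z = 0) ∨
      (x = 1 ∧ y = a ∧ z = c) := by
  have hx₀ : 0 ≤ x := nonneg_of_mul_nonneg_right (h₁.trans h₂) hc
  have hx₁ : x ≤ 1 := le_of_mul_le_mul_left (by linarith) hc
  interval_cases x
  · obtain rfl : z = 0 := by linarith
    simp only [mul_zero, zero_add, sub_zero] at h₃ h₄
    have hy₀ : 0 ≤ y := nonneg_of_mul_nonneg_right (by linarith) hc
    have hy₁ : y ≤ 1 := le_of_mul_le_mul_left (by linarith) hc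
    interval_cases y <;> simp
  · rcases eq_zero_or_eq_of_mul_eq_mul_of_isCoprime hc hca h₁ (by linarith) (by linarith) with
      ⟨rfl, rfl⟩ | ⟨rfl, rfl⟩ <;> simp

theorem stmt_11_general (a c : ℤ) (hc : 1 ≤ c)
    (hg : Int.gcd a c = 1) :
    TetIsEmpty 1 a c := by
  intro x hx hlat
  obtain ⟨m, hm⟩ := hlat 0
  obtain ⟨n, hn⟩ := hlat 1
  obtain ⟨k, hk⟩ := hlat 2
  obtain rfl : x = ![(m : ℝ), n, k] := by ext i; fin_cases i <;> simp [hm, hn, hk]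
  obtain ⟨h₁, h₂, h₃, h₄⟩ := tet_one_subset_tetOneFacets (by omega) hx
  simp only [Matrix.cons_val] at h₁ h₂ h₃ h₄
  norm_cast at h₁ h₂ h₃ h₄
  have hca : IsCoprime c a := Int.isCoprime_iff_gcd_eq_one.2 (by rwa [Int.gcd_comm])
  rcases tetOneFacets_int_cases (by omega) hca h₁ h₂ h₃ h₄ with
    ⟨rfl, rfl, rfl⟩ | ⟨rfl, rfl, rfl⟩ | ⟨rfl, rfl, rfl⟩ | ⟨rfl, rfl, rfl⟩ <;> simp

/-- If `0 ≤ a < c`, `c ≥ 1` and `gcd(a,c) = 1`, then the tetrahedron `T_{1,a,c}` with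
vertices `(0,0,0)`, `(1,0,0)`, `(0,1,0)`, `(1,a,c)` is empty. -/
theorem stmt_11 (a c : ℤ) (ha : 0 ≤ a) (hac : a < c) (hc : 1 ≤ c)
    (hg : Int.gcd a c = 1) :
    TetIsEmpty 1 a c :=
  stmt_11_general a c hc hg
end

section
/- Let c > 1 be an integer, let a, b be integers with 0 ≤ a, b < c, and let d = (1−a−b) mod c. If the tetrahedron T_{a,b,c} is empty, then a + b + d = c + 1. -/
/-!
As `d ≡ 1 - a - b (mod c)` with `0 ≤ a, b, d < c`, the sum `a + b + d` is `1`, `c + 1` or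
`2c + 1`. The slice of `T_{a,b,c}` at height `1` is the triangle `(a/c, b/c) + (1 - 1/c) Δ`,
`Δ` the standard triangle. If `a + b + d = 1` then `a + b ≤ 1` and it contains `(a, b)`; if
`a + b + d = 2c + 1` then `a + b ≥ c + 2` and it contains `(1, 1)`. For `c > 1` no vertex of
`T_{a,b,c}` has height `1`, so both cases contradict emptiness.
-/

lemma weighted_vertices_mem_tet (a b c : ℤ) {w₀ w₁ w₂ w₃ : ℝ} (h₀ : 0 ≤ w₀) (h₁ : 0 ≤ w₁)
    (h₂ : 0 ≤ w₂) (h₃ : 0 ≤ w₃) (hsum : w₀ + w₁ + w₂ + w₃ = 1) :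
    w₀ • ![0, 0, 0] + w₁ • ![1, 0, 0] + w₂ • ![0, 1, 0] + w₃ • ![(a : ℝ), (b : ℝ), (c : ℝ)]
      ∈ Tet a b c := by
  have hvertices : ∀ i : Fin 4,
      ![![0, 0, 0], ![1, 0, 0], ![0, 1, 0], ![(a : ℝ), (b : ℝ), (c : ℝ)]] i ∈ Tet a b c := by
    intro i
    fin_cases i <;> exact subset_convexHull ℝ _ (by simp)
  have hmem := (convex_convexHull ℝ _ : Convex ℝ (Tet a b c)).sum_mem (t := Finset.univ)
    (w := ![w₀, w₁, w₂, w₃])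
    (fun i _ => by fin_cases i <;> assumption)
    (by simp [Fin.sum_univ_four, hsum])
    (fun i _ => hvertices i)
  simpa [Tet, Fin.sum_univ_four] using hmem

lemma mem_tet_of_height_one {a b c : ℤ} (hc : 0 < c) {p q : ℝ} (hp : a ≤ c * p)
    (hq : b ≤ c * q) (hpq : c * p - a + (c * q - b) ≤ c - 1) :
    ![p, q, 1] ∈ Tet a b c := by
  have hC : (0 : ℝ) < c := by exact_mod_cast hc
  convert weighted_vertices_mem_tet a b c (w₀ := (c - 1 - (c * p - a) - (c * q - b)) / c)
    (w₁ := (c * p - a) / c) (w₂ := (c * q - b) / c) (w₃ := 1 / c)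
    (div_nonneg (by linarith) hC.le) (div_nonneg (by linarith) hC.le)
    (div_nonneg (by linarith) hC.le) (by positivity) (by field_simp; ring) using 1
  funext i
  fin_cases i <;> simp <;> field_simp <;> ring

lemma TetIsEmpty.not_mem_of_height_one {a b c : ℤ} (hempty : TetIsEmpty a b c) (hc : 1 < c)
    (p q : ℤ) : ![(p : ℝ), q, 1] ∉ Tet a b c := by
  intro hx
  have hlattice : IsLatticePt ![(p : ℝ), q, 1] := by
    intro i
    fin_cases i
    exacts [⟨p, rfl⟩, ⟨q, rfl⟩, ⟨1, by simp⟩]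
  rcases hempty _ hx hlattice with h | h | h | h <;> have h₂ := congrFun h 2 <;> simp at h₂
  exact hc.ne (by exact_mod_cast h₂)

/-- If `c > 1`, `0 ≤ a, b < c`, `d = (1 - a - b) mod c` and the tetrahedron `T_{a,b,c}` is
empty, then `a + b + d = c + 1`. -/
theorem stmt_13 (a b c d : ℤ) (hc : 1 < c) (ha : 0 ≤ a) (hac : a < c) (hb : 0 ≤ b)
    (hbc : b < c) (hd : d = (1 - a - b) % c)
    (hempty : TetIsEmpty a b c) :
    a + b + d = c + 1 := by
  have hd₀ : 0 ≤ d := hd ▸ Int.emod_nonneg _ (by omega)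
  have hdc : d < c := hd ▸ Int.emod_lt_of_pos _ (by omega)
  obtain ⟨k, hk⟩ : ∃ k, 1 - a - b = c * k + d :=
    ⟨(1 - a - b) / c, by rw [hd, Int.mul_ediv_add_emod]⟩
  have hk_lo : -2 ≤ k := by
    by_contra! h
    nlinarith
  have hk_hi : k ≤ 0 := by
    by_contra! h
    nlinarith
  interval_cases k
  · have hab : c + 2 ≤ a + b := by omega
    have hmem : ![(1 : ℝ), 1, 1] ∈ Tet a b c := by
      apply mem_tet_of_height_one (by omega) <;> norm_cast <;> omega
    exact (hempty.not_mem_of_height_one hc 1 1 (by exact_mod_cast hmem)).elim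
  · omega
  · have hab : a + b ≤ 1 := by omega
    have hmem : ![(a : ℝ), (b : ℝ), 1] ∈ Tet a b c := by
      apply mem_tet_of_height_one (by omega) <;> norm_cast <;> nlinarith
    exact (hempty.not_mem_of_height_one hc a b hmem).elim
end

section
/- Let c > 1 and let n be an integer with 1 < n < c and gcd(n,c) = 1. Then the set of k ∈ {1, ..., c−2} with f_n(k) = 1 is exactly { ⌊kc/n⌋ : k = 1, ..., n−1 }. -/
/-!
A step `f_n(k) = 1` means that a multiple `m c` of `c` lies in `(k n, (k+1) n]`, while
`⌊m c / n⌋ = k` means that `m c` lies in `[k n, (k+1) n)`. Coprimality of `n` and `c` rules out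
both endpoints (`c ∤ k + 1` for `k ≤ c - 2`, and `n ∤ m` for `m ≤ n - 1`), so both conditions say
`k n < m c < (k+1) n`, and the ranges `1 ≤ k ≤ c - 2` and `1 ≤ m ≤ n - 1` correspond.
-/

/-- The arithmetic function `f_n(k) = ⌊(k+1)n/c⌋ - ⌊kn/c⌋` (depending on the modulus `c`). -/
noncomputable def fArith (c n k : ℤ) : ℤ :=
  ⌊(((k + 1) * n : ℤ) : ℚ) / (c : ℚ)⌋ - ⌊((k * n : ℤ) : ℚ) / (c : ℚ)⌋

theorem floor_intCast_div_intCast_of_nonneg {K : Type*} [Field K] [LinearOrder K]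
    [IsOrderedRing K] [FloorRing K] (x : ℤ) {c : ℤ} (hc : 0 ≤ c) :
    ⌊(x : K) / c⌋ = x / c := by
  rw [Int.floor_div_cast_of_nonneg hc, Int.floor_intCast]

theorem Int.mul_ne_mul_of_gcd_eq_one {a b x y : ℤ} (h : Int.gcd a b = 1) (hy : 0 < y)
    (hya : y < a) : x * a ≠ y * b := by
  intro hxy
  have hay : a ∣ y := Int.dvd_of_dvd_mul_left_of_gcd_one ⟨x, by linarith⟩ h
  exact hy.ne' (Int.eq_zero_of_dvd_of_nonneg_of_lt hy.le hya hay)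

theorem fArith_eq_ediv {c : ℤ} (hc : 0 ≤ c) (n k : ℤ) :
    fArith c n k = (k + 1) * n / c - k * n / c := by
  simp only [fArith, floor_intCast_div_intCast_of_nonneg _ hc]

theorem fArith_eq_one_iff {c n : ℤ} (hc : 0 < c) (hnc : n ≤ c) (k : ℤ) :
    fArith c n k = 1 ↔ ∃ m, k * n < m * c ∧ m * c ≤ (k + 1) * n := by
  rw [fArith_eq_ediv hc.le]
  have hstep : (k + 1) * n / c ≤ k * n / c + 1 :=
    calc (k + 1) * n / c ≤ (k * n + 1 * c) / c := Int.ediv_le_ediv hc (by linarith)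
      _ = k * n / c + 1 := Int.add_mul_ediv_right _ _ hc.ne'
  constructor
  · intro h
    refine ⟨(k + 1) * n / c, ?_, Int.ediv_mul_le _ hc.ne'⟩
    have hlt := Int.lt_ediv_add_one_mul_self (k * n) hc
    rwa [show k * n / c + 1 = (k + 1) * n / c by omega] at hlt
  · rintro ⟨m, hlo, hhi⟩
    have h1 : k * n / c < m := (Int.ediv_lt_iff_lt_mul hc).2 hlo
    have h2 : m ≤ (k + 1) * n / c := (Int.le_ediv_iff_mul_le hc).2 hhi
    omega

theorem stmt_15_general (c n : ℤ) (hn : 1 < n) (hnc : n < c)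
    (hg : Int.gcd n c = 1) :
    {k : ℤ | 1 ≤ k ∧ k ≤ c - 2 ∧ fArith c n k = 1} =
      (fun k : ℤ => ⌊((k * c : ℤ) : ℚ) / (n : ℚ)⌋) '' (Set.Icc 1 (n - 1)) := by
  have hn0 : 0 < n := by omega
  have hc0 : 0 < c := by omega
  ext k
  simp only [Set.mem_ofPred_eq, Set.mem_image, Set.mem_Icc, fArith_eq_one_iff hc0 hnc.le,
    floor_intCast_div_intCast_of_nonneg _ hn0.le]
  constructor
  · rintro ⟨hk1, hk2, m, hlo, hhi⟩
    have hlt : m * c < (k + 1) * n := lt_of_le_of_ne hhi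
      (Int.mul_ne_mul_of_gcd_eq_one (by rwa [Int.gcd_comm]) (by omega) (by omega))
    exact ⟨m, ⟨by nlinarith, by nlinarith⟩, (Int.ediv_eq_iff_of_pos hn0).2 ⟨hlo.le, by linarith⟩⟩
  · rintro ⟨m, ⟨hm1, hmn⟩, rfl⟩
    have hhi := Int.lt_ediv_add_one_mul_self (m * c) hn0
    have hlt : m * c / n * n < m * c := lt_of_le_of_ne (Int.ediv_mul_le _ hn0.ne')
      (Int.mul_ne_mul_of_gcd_eq_one hg hm1 (by omega))
    exact ⟨by nlinarith, by nlinarith, m, hlt, by linarith⟩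

/-- For `c > 1` and `1 < n < c` with `gcd(n,c) = 1`, the set of `k ∈ {1, ..., c-2}` with
`f_n(k) = 1` is exactly `{⌊kc/n⌋ : k = 1, ..., n-1}`. -/
theorem stmt_15 (c n : ℤ) (hc : 1 < c) (hn : 1 < n) (hnc : n < c)
    (hg : Int.gcd n c = 1) :
    {k : ℤ | 1 ≤ k ∧ k ≤ c - 2 ∧ fArith c n k = 1} =
      (fun k : ℤ => ⌊((k * c : ℤ) : ℚ) / (n : ℚ)⌋) '' (Set.Icc 1 (n - 1)) :=
  stmt_15_general c n hn hnc hg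
end

section
/- Let c > 1 be an integer, let a, b be integers with 0 ≤ a, b < c, let d = (1−a−b) mod c, and suppose T_{a,b,c} is a clean lattice tetrahedron. Then T_{a,b,c} is empty if and only if a + b + d = c + 1 and f_a(k) + f_b(k) + f_d(k) = 1 for every integer k with 1 ≤ k ≤ c−2. -/
/-- `T_{a,b,c}` is a clean lattice tetrahedron: it contains no point of `ℤ³` on its
boundary other than its four vertices. -/
def TetIsClean (a b c : ℤ) : Prop :=
  ∀ x ∈ frontier (Tet a b c), IsLatticePt x →
    x = ![0,0,0] ∨ x = ![1,0,0] ∨ x = ![0,1,0] ∨ x = ![(a : ℝ), (b : ℝ), (c : ℝ)]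

/-!
In units of `1/c`, the barycentric coordinates of a lattice point `(x, y, k)` are the integers
`cx - ak`, `cy - bk`, `c + (a + b - 1)k - c(x + y)` and `k`; the first two are fixed mod `c` by `k`
and the four sum to `c`. So there is an interior lattice point at height `k` iff
`(ak mod c) + (bk mod c) > c + k`. Cleanness makes `a`, `b` and `a + b - 1 ≡ -d` units mod `c`:
otherwise one of the heights `k`, `c - k` carries a lattice point on a facet. Then the residue sum
`R(k) = (ak mod c) + (bk mod c) + (dk mod c)` is `≡ k (mod c)` and `R(c - k) = 3c - R(k)`, so
emptiness says `R(k) = c + k` for `0 < k < c`. Comparing with `(a + b + d)k = c·Σ⌊nk/c⌋ + R(k)`,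
this is `a + b + d = c + 1` together with `f_a + f_b + f_d = 1`.
-/

theorem pos_of_mem_interior {E : Type*} [TopologicalSpace E] [AddCommGroup E] [Module ℝ E]
    [ContinuousAdd E] [ContinuousSMul ℝ E] {s : Set E} {f : E → ℝ} {p v : E}
    (hp : p ∈ interior s) (hs : ∀ q ∈ s, 0 ≤ f q) (hv : ∀ t : ℝ, 0 < t → f (p + t • v) < f p) :
    0 < f p := by
  have hnear : ∀ᶠ t : ℝ in nhds 0, p + t • v ∈ s := by
    have hcont : Continuous fun t : ℝ => p + t • v := by fun_prop
    exact hcont.tendsto' 0 p (by simp) |>.eventually (mem_interior_iff_mem_nhds.1 hp)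
  obtain ⟨t, hts, ht⟩ := ((hnear.filter_mono nhdsWithin_le_nhds).and
    (self_mem_nhdsWithin (s := Set.Ioi (0 : ℝ)))).exists
  exact (hs _ hts).trans_lt (hv t ht)

section Tet

variable {a b c : ℤ}

theorem mem_Tet_iff (hc : 0 < c) {p : Fin 3 → ℝ} :
    p ∈ Tet a b c ↔ 0 ≤ p 2 ∧ a * p 2 ≤ c * p 0 ∧ b * p 2 ≤ c * p 1 ∧
      c * (p 0 + p 1) ≤ c + (a + b - 1) * p 2 := by
  have hc' : (0 : ℝ) < c := by exact_mod_cast hc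
  constructor
  · refine fun hp => convexHull_min (t := {q : Fin 3 → ℝ | 0 ≤ q 2 ∧ a * q 2 ≤ c * q 0 ∧
      b * q 2 ≤ c * q 1 ∧ c * (q 0 + q 1) ≤ c + (a + b - 1) * q 2}) ?_ ?_ hp
    · intro q hq
      simp only [Set.mem_insert_iff, Set.mem_singleton_iff] at hq
      rcases hq with rfl | rfl | rfl | rfl <;>
        simp only [Set.mem_ofPred_eq, Matrix.cons_val] <;>
        (try refine ⟨?_, ?_, ?_, ?_⟩) <;> linarith
    · rintro x ⟨hx1, hx2, hx3, hx4⟩ y ⟨hy1, hy2, hy3, hy4⟩ α β hα hβ hαβ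
      simp only [Set.mem_ofPred_eq, Pi.add_apply, Pi.smul_apply, smul_eq_mul]
      refine ⟨by positivity, by nlinarith, by nlinarith, by nlinarith⟩
  · rintro ⟨h1, h2, h3, h4⟩
    set v : Fin 4 → Fin 3 → ℝ := ![![0,0,0], ![1,0,0], ![0,1,0], ![(a : ℝ), (b : ℝ), (c : ℝ)]]
    -- barycentric coordinates of `p`
    set w : Fin 4 → ℝ := ![(c + (a + b - 1) * p 2 - c * (p 0 + p 1)) / c,
      (c * p 0 - a * p 2) / c, (c * p 1 - b * p 2) / c, p 2 / c]
    have hw : ∀ i ∈ Finset.univ, 0 ≤ w i := by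
      intro i _
      fin_cases i <;> simp only [w] <;> apply div_nonneg <;> linarith
    have hw1 : ∑ i, w i = 1 := by
      simp only [w, Fin.sum_univ_four, Matrix.cons_val]
      field_simp
      ring
    have hp : ∑ i, w i • v i = p := by
      ext j
      fin_cases j <;>
        simp only [w, v, Fin.zero_eta, Fin.mk_one, Fin.reduceFinMk, Finset.sum_apply,
          Fin.sum_univ_four, Pi.smul_apply, smul_eq_mul, Matrix.cons_val] <;>
        field_simp <;> ring
    rw [← hp]
    exact (convex_convexHull ℝ _).sum_mem hw hw1 fun i _ => subset_convexHull ℝ _ (by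
      fin_cases i <;> simp [v])

theorem mem_interior_Tet_iff (hc : 0 < c) {p : Fin 3 → ℝ} :
    p ∈ interior (Tet a b c) ↔ 0 < p 2 ∧ a * p 2 < c * p 0 ∧ b * p 2 < c * p 1 ∧
      c * (p 0 + p 1) < c + (a + b - 1) * p 2 := by
  have hc' : (0 : ℝ) < c := by exact_mod_cast hc
  constructor
  · intro hp
    have hT := fun q (hq : q ∈ Tet a b c) => (mem_Tet_iff hc).1 hq
    refine ⟨?_, ?_, ?_, ?_⟩
    · refine pos_of_mem_interior (f := fun q => q 2) (v := ![0, 0, -1]) hp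
        (fun q hq => (hT q hq).1) fun t ht => ?_
      simp only [Pi.add_apply, Pi.smul_apply, smul_eq_mul, Matrix.cons_val]
      linarith
    · refine sub_pos.1 <| pos_of_mem_interior (f := fun q => c * q 0 - a * q 2)
        (v := ![-1, 0, 0]) hp (fun q hq => sub_nonneg.2 (hT q hq).2.1) fun t ht => ?_
      simp only [Pi.add_apply, Pi.smul_apply, smul_eq_mul, Matrix.cons_val]
      nlinarith
    · refine sub_pos.1 <| pos_of_mem_interior (f := fun q => c * q 1 - b * q 2)
        (v := ![0, -1, 0]) hp (fun q hq => sub_nonneg.2 (hT q hq).2.2.1) fun t ht => ?_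
      simp only [Pi.add_apply, Pi.smul_apply, smul_eq_mul, Matrix.cons_val]
      nlinarith
    · refine sub_pos.1 <| pos_of_mem_interior
        (f := fun q => c + (a + b - 1) * q 2 - c * (q 0 + q 1)) (v := ![1, 0, 0]) hp
        (fun q hq => sub_nonneg.2 (hT q hq).2.2.2) fun t ht => ?_
      simp only [Pi.add_apply, Pi.smul_apply, smul_eq_mul, Matrix.cons_val]
      nlinarith
  · intro hp
    refine interior_maximal (t := {q : Fin 3 → ℝ | 0 < q 2 ∧ (a : ℝ) * q 2 < c * q 0 ∧
      (b : ℝ) * q 2 < c * q 1 ∧ (c : ℝ) * (q 0 + q 1) < c + (a + b - 1) * q 2})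
      (fun q hq => (mem_Tet_iff hc).2 ⟨hq.1.le, hq.2.1.le, hq.2.2.1.le, hq.2.2.2.le⟩) ?_ hp
    simp only [Set.ofPred_and]
    apply_rules [IsOpen.inter, isOpen_lt] <;> fun_prop

end Tet

theorem isLatticePt_iff_s17 {p : Fin 3 → ℝ} : IsLatticePt p ↔ ∃ x y z : ℤ, p = ![(x : ℝ), y, z] := by
  constructor
  · intro hp
    obtain ⟨x, hx⟩ := hp 0
    obtain ⟨y, hy⟩ := hp 1
    obtain ⟨z, hz⟩ := hp 2
    exact ⟨x, y, z, by ext i; fin_cases i <;> simp [hx, hy, hz]⟩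
  · rintro ⟨x, y, z, rfl⟩ i
    fin_cases i
    exacts [⟨x, rfl⟩, ⟨y, rfl⟩, ⟨z, rfl⟩]

section LatticeTet

variable {a b c : ℤ}

def InTet (a b c x y z : ℤ) : Prop :=
  0 ≤ z ∧ a * z ≤ c * x ∧ b * z ≤ c * y ∧ c * (x + y) ≤ c + (a + b - 1) * z

def InTetInterior (a b c x y z : ℤ) : Prop :=
  0 < z ∧ a * z < c * x ∧ b * z < c * y ∧ c * (x + y) < c + (a + b - 1) * z

theorem latticePt_mem_Tet_iff (hc : 0 < c) {x y z : ℤ} :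
    ![(x : ℝ), y, z] ∈ Tet a b c ↔ InTet a b c x y z := by
  rw [mem_Tet_iff hc, InTet]
  simp only [Matrix.cons_val_zero, Matrix.cons_val_one, Matrix.cons_val_two, Matrix.head_cons,
    Matrix.tail_cons]
  norm_cast

theorem latticePt_mem_interior_Tet_iff (hc : 0 < c) {x y z : ℤ} :
    ![(x : ℝ), y, z] ∈ interior (Tet a b c) ↔ InTetInterior a b c x y z := by
  rw [mem_interior_Tet_iff hc, InTetInterior]
  simp only [Matrix.cons_val_zero, Matrix.cons_val_one, Matrix.cons_val_two, Matrix.head_cons,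
    Matrix.tail_cons]
  norm_cast

theorem InTetInterior.lt {x y z : ℤ} (h : InTetInterior a b c x y z) : z < c := by
  obtain ⟨-, h1, h2, h3⟩ := h
  linarith

theorem eq_zero_or_eq_of_isVertex {x y z : ℤ}
    (h : ![(x : ℝ), y, z] = ![0,0,0] ∨ ![(x : ℝ), y, z] = ![1,0,0] ∨
      ![(x : ℝ), y, z] = ![0,1,0] ∨ ![(x : ℝ), y, z] = ![(a : ℝ), (b : ℝ), (c : ℝ)]) :
    z = 0 ∨ z = c := by
  rcases h with h | h | h | h <;> have h2 := congrFun h 2 <;> simp at h2 <;> simp [h2]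

theorem TetIsClean.inTetInterior (h : TetIsClean a b c) (hc : 0 < c) {x y z : ℤ}
    (hxyz : InTet a b c x y z) (hz : 0 < z) (hzc : z < c) : InTetInterior a b c x y z := by
  by_contra hint
  rw [← latticePt_mem_Tet_iff hc] at hxyz
  rw [← latticePt_mem_interior_Tet_iff hc] at hint
  have hvert := h _ ⟨subset_closure hxyz, hint⟩ (isLatticePt_iff_s17.2 ⟨x, y, z, rfl⟩)
  rcases eq_zero_or_eq_of_isVertex hvert with rfl | rfl <;> omega

theorem exists_inTetInterior_iff (hc : 0 < c) {k : ℤ} (hk : 0 < k) :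
    (∃ x y, InTetInterior a b c x y k) ↔ c + k < a * k % c + b * k % c := by
  have ha := Int.mul_ediv_add_emod (a * k) c
  have hb := Int.mul_ediv_add_emod (b * k) c
  constructor
  · rintro ⟨x, y, -, hx, hy, hxy⟩
    have hx' : a * k / c + 1 ≤ x := (Int.ediv_lt_iff_lt_mul hc).2 (by linarith)
    have hy' : b * k / c + 1 ≤ y := (Int.ediv_lt_iff_lt_mul hc).2 (by linarith)
    nlinarith
  · intro h
    have := Int.emod_lt_of_pos (a * k) hc
    have := Int.emod_lt_of_pos (b * k) hc
    exact ⟨a * k / c + 1, b * k / c + 1, hk, by linarith, by linarith, by linarith⟩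

theorem TetIsClean.tetIsEmpty_iff (h : TetIsClean a b c) (hc : 0 < c) :
    TetIsEmpty a b c ↔ ∀ k, 0 < k → a * k % c + b * k % c ≤ c + k := by
  constructor
  · refine fun hempty k hk => not_lt.1 fun hlt => ?_
    obtain ⟨x, y, hxyz⟩ := (exists_inTetInterior_iff hc hk).2 hlt
    have hmem := (latticePt_mem_interior_Tet_iff hc).2 hxyz
    have hvert := hempty _ (interior_subset hmem) (isLatticePt_iff_s17.2 ⟨x, y, k, rfl⟩)
    rcases eq_zero_or_eq_of_isVertex hvert with rfl | rfl
    exacts [hk.false, hxyz.lt.false]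
  · intro hnone p hp hlat
    obtain ⟨x, y, z, rfl⟩ := isLatticePt_iff_s17.1 hlat
    refine h _ ⟨subset_closure hp, fun hint => ?_⟩ hlat
    have hxyz := (latticePt_mem_interior_Tet_iff hc).1 hint
    exact (hnone z hxyz.1).not_gt ((exists_inTetInterior_iff hc hxyz.1).1 ⟨x, y, hxyz⟩)

end LatticeTet

section Residues

variable {a b c d : ℤ}

theorem exists_multiple_between (hc : 0 < c) {u k : ℤ} (hu : c ∣ u * k) (v : ℤ) (hk : 0 < k)
    (hkc : k < c) :
    ∃ j, 0 < j ∧ j < c ∧ c ∣ u * j ∧ ∃ y, v * j ≤ c * y ∧ c * y + j ≤ v * j + c := by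
  have hdiv := Int.mul_ediv_add_emod (v * k) c
  have hr0 := Int.emod_nonneg (v * k) hc.ne'
  have hrc := Int.emod_lt_of_pos (v * k) hc
  rcases le_or_gt k (v * k % c) with hr | hr
  · exact ⟨k, hk, hkc, hu, v * k / c + 1, by linarith, by linarith⟩
  · -- `c * (v - v * k / c) = v * (c - k) + v * k % c`
    refine ⟨c - k, by omega, by omega, ?_, v - v * k / c, by linarith, by linarith⟩
    rw [mul_sub]
    exact dvd_sub (dvd_mul_left c u) hu

theorem TetIsClean.not_dvd_a_mul (h : TetIsClean a b c) (hc : 0 < c) {k : ℤ}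
    (hk : 0 < k) (hkc : k < c) : ¬ c ∣ a * k := fun hak => by
  obtain ⟨j, hj, hjc, ⟨x, hx⟩, y, hy, hy'⟩ := exists_multiple_between hc hak b hk hkc
  exact (h.inTetInterior hc ⟨hj.le, hx.le, hy, by linarith⟩ hj hjc).2.1.ne hx

theorem TetIsClean.not_dvd_b_mul (h : TetIsClean a b c) (hc : 0 < c) {k : ℤ}
    (hk : 0 < k) (hkc : k < c) : ¬ c ∣ b * k := fun hbk => by
  obtain ⟨j, hj, hjc, ⟨y, hy⟩, x, hx, hx'⟩ := exists_multiple_between hc hbk a hk hkc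
  exact (h.inTetInterior hc ⟨hj.le, hx, hy.le, by linarith⟩ hj hjc).2.2.1.ne hy

theorem TetIsClean.not_dvd_add_sub_one_mul (h : TetIsClean a b c) (hc : 0 < c) {k : ℤ}
    (hk : 0 < k) (hkc : k < c) : ¬ c ∣ (a + b - 1) * k := fun hk' => by
  obtain ⟨j, hj, hjc, ⟨m, hm⟩, x, hx, hx'⟩ := exists_multiple_between hc hk' a hk hkc
  have hxy : c * (x + (1 + m - x)) = c + (a + b - 1) * j := by rw [hm]; ring
  exact (h.inTetInterior hc ⟨hj.le, hx, by linarith, hxy.le⟩ hj hjc).2.2.2.ne hxy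

theorem mul_sub_emod_of_not_dvd (hc : 0 < c) {n k : ℤ} (h : ¬ c ∣ n * k) :
    n * (c - k) % c = c - n * k % c := by
  have hpos := (Int.emod_pos_of_not_dvd h).resolve_left hc.ne'
  have hdiv := Int.mul_ediv_add_emod (n * k) c
  have hlt := Int.emod_lt_of_pos (n * k) hc
  rw [show n * (c - k) = c - n * k % c + c * (n - n * k / c - 1) by linarith,
    Int.add_mul_emod_self_left, Int.emod_eq_of_lt (by linarith) (by linarith)]

theorem dvd_emod_add_emod_add_emod_sub (hdvd : c ∣ a + b + d - 1) (k : ℤ) :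
    c ∣ a * k % c + b * k % c + d * k % c - k := by
  simp only [Int.emod_def]
  rw [show a * k - c * (a * k / c) + (b * k - c * (b * k / c)) + (d * k - c * (d * k / c)) - k =
    (a + b + d - 1) * k - c * (a * k / c + b * k / c + d * k / c) by ring]
  exact dvd_sub (dvd_mul_of_dvd_left hdvd k) (dvd_mul_right _ _)

theorem forall_emod_add_le_iff (hc : 0 < c) (hdvd : c ∣ a + b + d - 1)
    (hA : ∀ k, 0 < k → k < c → ¬ c ∣ a * k) (hB : ∀ k, 0 < k → k < c → ¬ c ∣ b * k)
    (hD : ∀ k, 0 < k → k < c → ¬ c ∣ d * k) :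
    (∀ k, 0 < k → a * k % c + b * k % c ≤ c + k) ↔
      ∀ k, 0 < k → k < c → a * k % c + b * k % c + d * k % c = c + k := by
  constructor
  · intro h k hk hkc
    obtain ⟨m, hm⟩ := dvd_emod_add_emod_add_emod_sub hdvd k
    have hle := h k hk
    have hle' := h (c - k) (by omega)
    rw [mul_sub_emod_of_not_dvd hc (hA k hk hkc), mul_sub_emod_of_not_dvd hc (hB k hk hkc)] at hle'
    have hd0 := (Int.emod_pos_of_not_dvd (hD k hk hkc)).resolve_left hc.ne'
    have hdc := Int.emod_lt_of_pos (d * k) hc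
    have hm0 : 0 < m := lt_of_mul_lt_mul_left (a := c) (by linarith) hc.le
    have hm2 : m < 2 := lt_of_mul_lt_mul_left (a := c) (by linarith) hc.le
    obtain rfl : m = 1 := by omega
    linarith
  · intro h k hk
    by_cases hkc : k < c
    · linarith [h k hk hkc, Int.emod_nonneg (d * k) hc.ne']
    · linarith [Int.emod_lt_of_pos (a * k) hc, Int.emod_lt_of_pos (b * k) hc]

theorem emod_add_emod_add_emod_eq_iff (hc : 0 < c) (habd : a + b + d = c + 1) (k : ℤ) :
    a * k % c + b * k % c + d * k % c = c + k ↔ a * k / c + b * k / c + d * k / c = k - 1 := by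
  have key : c * (a * k / c + b * k / c + d * k / c - (k - 1)) =
      c + k - (a * k % c + b * k % c + d * k % c) := by
    linear_combination Int.mul_ediv_add_emod (a * k) c + Int.mul_ediv_add_emod (b * k) c +
      Int.mul_ediv_add_emod (d * k) c + k * habd
  rw [eq_comm, ← sub_eq_zero, ← key, mul_eq_zero, sub_eq_zero, or_iff_right hc.ne']

theorem forall_eq_sub_one_iff {S : ℤ → ℤ} (h1 : S 1 = 0) (n : ℤ) :
    (∀ k, 0 < k → k < n → S k = k - 1) ↔ ∀ k, 1 ≤ k → k ≤ n - 2 → S (k + 1) - S k = 1 := by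
  constructor
  · intro h k hk hkn
    rw [h (k + 1) (by omega) (by omega), h k (by omega) (by omega)]
    ring
  · intro h k hk
    have hk1 : 1 ≤ k := hk
    clear hk
    induction k, hk1 using Int.leInduction with
    | base => simp [h1]
    | succ k hk ih => intro hkn; linarith [ih (by omega), h k hk (by omega)]

theorem fArith_eq (hc : 0 < c) (n k : ℤ) : fArith c n k = n * (k + 1) / c - n * k / c := by
  simp only [fArith, Int.floor_div_cast_of_nonneg hc.le, Int.floor_intCast, mul_comm n]

theorem forall_emod_add_emod_add_emod_iff (hc : 1 < c) (ha : 0 ≤ a) (hac : a < c) (hb : 0 ≤ b)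
    (hbc : b < c) (hd : 0 ≤ d) (hdc : d < c) :
    (∀ k, 0 < k → k < c → a * k % c + b * k % c + d * k % c = c + k) ↔
      a + b + d = c + 1 ∧ ∀ k, 1 ≤ k → k ≤ c - 2 →
        fArith c a k + fArith c b k + fArith c d k = 1 := by
  have hc0 : 0 < c := by omega
  have hS1 : a * 1 / c + b * 1 / c + d * 1 / c = 0 := by
    simp [Int.ediv_eq_zero_of_lt, *]
  have hf : ∀ k, fArith c a k + fArith c b k + fArith c d k =
      (a * (k + 1) / c + b * (k + 1) / c + d * (k + 1) / c) -
        (a * k / c + b * k / c + d * k / c) := by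
    intro k
    simp only [fArith_eq hc0]
    ring
  simp only [hf]
  rw [← forall_eq_sub_one_iff (S := fun k => a * k / c + b * k / c + d * k / c) hS1 c]
  constructor
  · intro h
    have habd : a + b + d = c + 1 := by
      simpa [Int.emod_eq_of_lt, *] using h 1 one_pos hc
    exact ⟨habd, fun k hk hkc => (emod_add_emod_add_emod_eq_iff hc0 habd k).1 (h k hk hkc)⟩
  · rintro ⟨habd, h⟩ k hk hkc
    exact (emod_add_emod_add_emod_eq_iff hc0 habd k).2 (h k hk hkc)

end Residues

/-- Let `c > 1`, `0 ≤ a, b < c`, `d = (1 - a - b) mod c`, and suppose `T_{a,b,c}` is a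
clean lattice tetrahedron. Then `T_{a,b,c}` is empty if and only if `a + b + d = c + 1` and
`f_a(k) + f_b(k) + f_d(k) = 1` for every integer `k` with `1 ≤ k ≤ c - 2`. -/
theorem stmt_17 (a b c d : ℤ) (hc : 1 < c) (ha : 0 ≤ a) (hac : a < c) (hb : 0 ≤ b)
    (hbc : b < c) (hd : d = (1 - a - b) % c) (hclean : TetIsClean a b c) :
    TetIsEmpty a b c ↔
      (a + b + d = c + 1 ∧
        ∀ k : ℤ, 1 ≤ k → k ≤ c - 2 →
          fArith c a k + fArith c b k + fArith c d k = 1) := by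
  have hc0 : 0 < c := by omega
  have hdvd : c ∣ a + b + d - 1 :=
    ⟨-((1 - a - b) / c), by rw [hd, Int.emod_def]; ring⟩
  have hD : ∀ k, 0 < k → k < c → ¬ c ∣ d * k := fun k hk hkc hdk =>
    hclean.not_dvd_add_sub_one_mul hc0 hk hkc <| by
      rw [show (a + b - 1) * k = (a + b + d - 1) * k - d * k by ring]
      exact dvd_sub (dvd_mul_of_dvd_left hdvd k) hdk
  rw [hclean.tetIsEmpty_iff hc0,
    forall_emod_add_le_iff hc0 hdvd (fun _ => hclean.not_dvd_a_mul hc0)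
      (fun _ => hclean.not_dvd_b_mul hc0) hD,
    forall_emod_add_emod_add_emod_iff hc ha hac hb hbc (hd ▸ Int.emod_nonneg _ hc0.ne')
      (hd ▸ Int.emod_lt_of_pos _ hc0)]
end

section
/- Let c > 1 be an integer and let a, b be integers with 0 < a, b < c and gcd(a,c) = gcd(b,c) = 1. Then the points of ℤ³ lying in the open parallelepiped {s(1,0,0) + t(0,1,0) + u(a,b,c) : 0 < s, t, u < 1} are exactly the c−1 points ⟨k(c−a)/c⟩(1,0,0) + ⟨k(c−b)/c⟩(0,1,0) + (k/c)(a,b,c) for k = 1, ..., c−1, where ⟨x⟩ = x − ⌊x⌋ denotes the fractional part. -/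
/-- The point `⟨k(c-a)/c⟩ (1,0,0) + ⟨k(c-b)/c⟩ (0,1,0) + (k/c) (a,b,c)`, where `⟨·⟩`
denotes the fractional part. -/
noncomputable def latPoint (a b c k : ℤ) : Fin 3 → ℝ :=
  Int.fract ((k * (c - a) : ℤ) / (c : ℝ)) • ![1, 0, 0] +
    Int.fract ((k * (c - b) : ℤ) / (c : ℝ)) • ![0, 1, 0] +
    ((k : ℝ) / (c : ℝ)) • ![(a : ℝ), (b : ℝ), (c : ℝ)]

lemma Int.fract_intCast_div_pos {m c : ℤ} (hc : c ≠ 0) (h : ¬ c ∣ m) :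
    0 < Int.fract ((m : ℝ) / c) := by
  refine (Int.fract_nonneg _).lt_of_ne' fun h0 => h ?_
  obtain ⟨n, hn⟩ := Int.fract_eq_zero_iff.1 h0
  rw [eq_div_iff (by exact_mod_cast hc)] at hn
  exact ⟨n, by rw [mul_comm]; exact_mod_cast hn.symm⟩

lemma not_dvd_mul_sub_of_coprime {a c k : ℤ} (hac : IsCoprime c a) (hk : ¬ c ∣ k) :
    ¬ c ∣ k * (c - a) := fun hd =>
  hk <| hac.dvd_of_dvd_mul_right <| by
    simpa [mul_sub] using (dvd_mul_left c k).sub hd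

lemma fract_mul_sub_div_eq {a c k m : ℤ} {s : ℝ} (hc : (c : ℝ) ≠ 0) (hs0 : 0 ≤ s) (hs1 : s < 1)
    (h : s + k / c * a = m) : Int.fract (((k * (c - a) : ℤ) : ℝ) / c) = s :=
  Int.fract_eq_iff.2 ⟨hs0, hs1, k - m, by push_cast; rw [← h]; field_simp; ring⟩

lemma fract_mul_sub_div_add_eq {a c k : ℤ} (hc : (c : ℝ) ≠ 0) :
    Int.fract (((k * (c - a) : ℤ) : ℝ) / c) + k / c * a =
      ((k - ⌊((k * (c - a) : ℤ) : ℝ) / c⌋ : ℤ) : ℝ) := by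
  rw [Int.fract]; push_cast; field_simp; ring

lemma latPoint_apply_zero (a b c k : ℤ) :
    latPoint a b c k 0 = Int.fract ((k * (c - a) : ℤ) / (c : ℝ)) + k / c * a := by
  simp [latPoint]

lemma latPoint_apply_one (a b c k : ℤ) :
    latPoint a b c k 1 = Int.fract ((k * (c - b) : ℤ) / (c : ℝ)) + k / c * b := by
  simp [latPoint]

lemma latPoint_apply_two (a b : ℤ) {c : ℤ} (hc : (c : ℝ) ≠ 0) (k : ℤ) :
    latPoint a b c k 2 = k := by
  simp [latPoint, div_mul_cancel₀ _ hc]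

lemma isLatticePt_latPoint (a b : ℤ) {c : ℤ} (hc : (c : ℝ) ≠ 0) (k : ℤ) :
    IsLatticePt (latPoint a b c k) := by
  intro i
  fin_cases i
  · exact ⟨_, (latPoint_apply_zero a b c k).trans (fract_mul_sub_div_add_eq hc)⟩
  · exact ⟨_, (latPoint_apply_one a b c k).trans (fract_mul_sub_div_add_eq hc)⟩
  · exact ⟨k, latPoint_apply_two a b hc k⟩

lemma latPoint_mem_openPar {a b c k : ℤ} (hac : IsCoprime c a) (hbc : IsCoprime c b)
    (hk0 : 0 < k) (hkc : k < c) : latPoint a b c k ∈ OpenPar a b c := by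
  have hc : 0 < c := hk0.trans hkc
  have hcR : (0 : ℝ) < c := by exact_mod_cast hc
  have hk : ¬ c ∣ k := fun h => (Int.le_of_dvd hk0 h).not_gt hkc
  refine ⟨_, _, (k : ℝ) / c, ?_, Int.fract_lt_one _, ?_, Int.fract_lt_one _,
    by positivity, (div_lt_one hcR).2 (by exact_mod_cast hkc), rfl⟩
  · exact Int.fract_intCast_div_pos hc.ne' (not_dvd_mul_sub_of_coprime hac hk)
  · exact Int.fract_intCast_div_pos hc.ne' (not_dvd_mul_sub_of_coprime hbc hk)

lemma exists_eq_latPoint {a b c : ℤ} (hc : 0 < c) {x : Fin 3 → ℝ} (hx : x ∈ OpenPar a b c)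
    (hlat : IsLatticePt x) : ∃ k ∈ Set.Icc 1 (c - 1), latPoint a b c k = x := by
  obtain ⟨s, t, u, hs0, hs1, ht0, ht1, hu0, hu1, rfl⟩ := hx
  have hcR : (0 : ℝ) < c := by exact_mod_cast hc
  obtain ⟨k, hk⟩ := hlat 2
  obtain ⟨m₀, hm₀⟩ := hlat 0
  obtain ⟨m₁, hm₁⟩ := hlat 1
  simp only [Fin.isValue, Pi.add_apply, Pi.smul_apply, Matrix.cons_val, smul_eq_mul, mul_one,
    mul_zero, add_zero, zero_add] at hk hm₀ hm₁
  have hu : u = k / c := by rw [← hk]; field_simp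
  subst hu
  have hk0 : 0 < k := by exact_mod_cast (div_pos_iff_of_pos_right hcR).1 hu0
  have hkc : k < c := by exact_mod_cast (div_lt_one hcR).1 hu1
  refine ⟨k, ⟨hk0, by omega⟩, funext fun i => ?_⟩
  fin_cases i
  · refine (latPoint_apply_zero a b c k).trans ?_
    rw [fract_mul_sub_div_eq hcR.ne' hs0.le hs1 hm₀]
    simp
  · refine (latPoint_apply_one a b c k).trans ?_
    rw [fract_mul_sub_div_eq hcR.ne' ht0.le ht1 hm₁]
    simp
  · simpa [latPoint_apply_two a b hcR.ne' k] using hk.symm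

theorem stmt_18_general (a b c : ℤ) (hc : 1 < c) (hga : Int.gcd a c = 1) (hgb : Int.gcd b c = 1) :
    ({x : Fin 3 → ℝ | x ∈ OpenPar a b c ∧ IsLatticePt x} =
        (fun k => latPoint a b c k) '' (Set.Icc 1 (c - 1))) ∧
      Set.InjOn (fun k => latPoint a b c k) (Set.Icc 1 (c - 1)) := by
  have hc0 : 0 < c := by omega
  have hcR : (c : ℝ) ≠ 0 := by exact_mod_cast hc0.ne'
  have hac : IsCoprime c a := (Int.isCoprime_iff_gcd_eq_one.2 hga).symm
  have hbc : IsCoprime c b := (Int.isCoprime_iff_gcd_eq_one.2 hgb).symm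
  refine ⟨Set.ext fun x => ⟨fun ⟨hx, hlat⟩ => exists_eq_latPoint hc0 hx hlat, ?_⟩, ?_⟩
  · rintro ⟨k, ⟨hk1, hkc⟩, rfl⟩
    exact ⟨latPoint_mem_openPar hac hbc (by omega) (by omega), isLatticePt_latPoint a b hcR k⟩
  · intro k₁ _ k₂ _ h
    simpa [latPoint_apply_two a b hcR] using congrFun h 2

/-- If `c > 1`, `0 < a, b < c` and `gcd(a,c) = gcd(b,c) = 1`, then the points of `ℤ³` lying
in the open parallelepiped `{s(1,0,0) + t(0,1,0) + u(a,b,c) : 0 < s, t, u < 1}` are exactly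
the `c - 1` distinct points `⟨k(c-a)/c⟩ (1,0,0) + ⟨k(c-b)/c⟩ (0,1,0) + (k/c)(a,b,c)` for
`k = 1, ..., c-1`. -/
theorem stmt_18 (a b c : ℤ) (hc : 1 < c) (ha : 0 < a) (hac : a < c) (hb : 0 < b)
    (hbc : b < c) (hga : Int.gcd a c = 1) (hgb : Int.gcd b c = 1) :
    ({x : Fin 3 → ℝ | x ∈ OpenPar a b c ∧ IsLatticePt x} =
        (fun k => latPoint a b c k) '' (Set.Icc 1 (c - 1))) ∧
      Set.InjOn (fun k => latPoint a b c k) (Set.Icc 1 (c - 1)) :=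
  stmt_18_general a b c hc hga hgb
end
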